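/- arXiv:1408.5836 — 7 statements merged into one kernel-verified Lean document; each statement's English description precedes it below -/
import Mathlib

section
/- Let m and n be coprime integers with 0 < m < n and let μ ∈ ℤ^n be dominant (μ_1 ≥ μ_2 ≥ … ≥ μ_n). Then the set B(μ,m,n) contains a unique maximal element with respect to the dominance order, i.e., there exists ν ∈ B(μ,m,n) such that every v ∈ B(μ,m,n) satisfies Σ_{j=1}^k v_j ≤ Σ_{j=1}^k ν_j for all k ∈ {1,…,n}. -/
/-!
For dominant `v`, `k ↦ psum v k` is concave on `{0, …, n}`, and `v ∈ B(μ, m, n)` says that it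
stays below `f k = psum μ k + k m / n`, equals `f n` at `n`, and is an integer at each of its
kinks, hence at most `⌊f k⌋` there. The greatest element is the vector of increments of the least
concave majorant `H` of `0`, `⌊f 1⌋, …, ⌊f (n-1)⌋`, `f n`: it touches these points at its kinks,
so it is integral there, and `H ≤ f` because `f` is concave (`μ` is dominant). Maximality is a
discrete minimum principle: a function lying below the concave `H` at `0`, at `n` and at its own
kinks lies below `H` everywhere, since between consecutive kinks it is affine.
-/

/-- `psum v k` is the partial sum `v₁ + ⋯ + v_k` of the first `k` entries of `v`
(1-indexed; the entry `v_j` for `j ∈ {1,…,n}` is `v ⟨j-1,_⟩`). -/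
def psum {n : ℕ} (v : Fin n → ℚ) (k : ℕ) : ℚ :=
  ∑ j ∈ Finset.univ.filter (fun j : Fin n => (j : ℕ) < k), v j

/-- The set `B(μ, m, n)`: dominant (weakly decreasing) vectors `v ∈ ℚⁿ` such that
`Σ_{j=1}^n v_j = Σ_{j=1}^n μ_j + m`, `Σ_{j=1}^k v_j ≤ Σ_{j=1}^k μ_j + km/n` for all
`k ∈ {1,…,n-1}`, and `Σ_{j=1}^k v_j ∈ ℤ` for every `k ∈ {1,…,n-1}` with `v_k > v_{k+1}`. -/
def Bset (m n : ℕ) (μ : Fin n → ℤ) : Set (Fin n → ℚ) :=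
  {v | Antitone v ∧
    psum v n = psum (fun i => (μ i : ℚ)) n + (m : ℚ) ∧
    (∀ k : ℕ, 1 ≤ k → k ≤ n - 1 →
      psum v k ≤ psum (fun i => (μ i : ℚ)) k + ((k : ℚ) * (m : ℚ)) / (n : ℚ)) ∧
    (∀ j : Fin n, ∀ h : (j : ℕ) + 1 < n,
      v ⟨(j : ℕ) + 1, h⟩ < v j → ∃ z : ℤ, psum v ((j : ℕ) + 1) = (z : ℚ))}

section DiscreteConcavity

variable {α : Type*} [AddCommGroup α] [LinearOrder α]

def ConcaveUpTo (n : ℕ) (H : ℕ → α) : Prop :=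
  ∀ k, k + 2 ≤ n → H (k + 2) - H (k + 1) ≤ H (k + 1) - H k

/-- A concave majorant of `g` on `{0, …, n}` that touches `g` at both ends and at each of its
kinks; `IsLeastConcaveMajorant.le_of_concaveUpTo` shows that it is the least one. -/
structure IsLeastConcaveMajorant (n : ℕ) (g H : ℕ → α) : Prop where
  concaveUpTo : ConcaveUpTo n H
  le : ∀ k ≤ n, g k ≤ H k
  eq_zero : H 0 = g 0
  eq_last : H n = g n
  eq_of_kink : ∀ k, k + 2 ≤ n → H (k + 2) - H (k + 1) ≠ H (k + 1) - H k → H (k + 1) = g (k + 1)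

theorem ConcaveUpTo.increment_antitone {n : ℕ} {H : ℕ → α} (hH : ConcaveUpTo n H) {i j : ℕ}
    (hij : i ≤ j) (hj : j + 1 ≤ n) : H (j + 1) - H j ≤ H (i + 1) - H i := by
  induction j, hij using Nat.le_induction with
  | base => exact le_rfl
  | succ j _ ih => exact (hH j hj).trans (ih (by omega))

/-- A minimum principle: away from `0`, `n` and the kinks of `φ`, the difference `F - φ` is
concave, so its leftmost minimum on `{0, …, n}` sits at one of those points. -/
theorem ConcaveUpTo.le_of_le_at_kinks [IsOrderedAddMonoid α] {n : ℕ} {φ F : ℕ → α}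
    (hF : ConcaveUpTo n F)
    (h0 : φ 0 ≤ F 0) (hn : φ n ≤ F n)
    (hkink : ∀ k, k + 2 ≤ n → φ (k + 2) - φ (k + 1) ≠ φ (k + 1) - φ k → φ (k + 1) ≤ F (k + 1))
    {k : ℕ} (hk : k ≤ n) : φ k ≤ F k := by
  classical
  set ψ : ℕ → α := fun j => F j - φ j with hψ
  have hmin : ∃ j, j ≤ n ∧ ∀ i ≤ n, ψ j ≤ ψ i := by
    simpa [Nat.lt_succ_iff] using (Finset.range (n + 1)).exists_min_image ψ ⟨0, by simp⟩
  obtain ⟨hjn, hjmin⟩ := Nat.find_spec hmin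
  set j := Nat.find hmin
  suffices hj : 0 ≤ ψ j from sub_nonneg.mp (hj.trans (hjmin k hk))
  by_cases hj0 : j = 0
  · rw [hj0]; exact sub_nonneg.mpr h0
  by_cases hjn' : j = n
  · rw [hjn']; exact sub_nonneg.mpr hn
  obtain ⟨i, hi⟩ : ∃ i, j = i + 1 := ⟨j - 1, by omega⟩
  by_cases hkinki : φ (i + 2) - φ (i + 1) = φ (i + 1) - φ i
  swap
  · rw [hi]; exact sub_nonneg.mpr (hkink i (by omega) hkinki)
  -- `i` is not a minimum of `ψ`, while `i + 2` is no lower than the minimum `i + 1`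
  have hdrop : ψ (i + 1) - ψ i < 0 := by
    obtain ⟨l, hl, hψl⟩ : ∃ l ≤ n, ψ l < ψ i := by
      have hnotmin := Nat.find_min hmin (show i < j by omega)
      simp only [not_and, not_forall, not_le, exists_prop] at hnotmin
      exact hnotmin (by omega)
    exact sub_neg.mpr (hi ▸ (hjmin l hl).trans_lt hψl)
  have hrise : 0 ≤ ψ (i + 2) - ψ (i + 1) := sub_nonneg.mpr (hi ▸ hjmin _ (by omega))
  have hconc : ψ (i + 2) - ψ (i + 1) ≤ ψ (i + 1) - ψ i := by
    simp only [hψ]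
    rw [sub_sub_sub_comm, sub_sub_sub_comm (F (i + 1)), hkinki]
    exact sub_le_sub_right (hF i (by omega)) _
  exact absurd (hrise.trans hconc) (not_le.mpr hdrop)

end DiscreteConcavity

theorem IsLeastConcaveMajorant.le_of_concaveUpTo {α : Type*} [AddCommGroup α] [LinearOrder α]
    [IsOrderedAddMonoid α] {n : ℕ} {g H F : ℕ → α} (hH : IsLeastConcaveMajorant n g H)
    (hF : ConcaveUpTo n F) (hgF : ∀ k ≤ n, g k ≤ F k) {k : ℕ} (hk : k ≤ n) : H k ≤ F k :=
  hF.le_of_le_at_kinks (hH.eq_zero ▸ hgF 0 n.zero_le) (hH.eq_last ▸ hgF n le_rfl)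
    (fun i hi hkink => hH.eq_of_kink i hi hkink ▸ hgF (i + 1) (by omega)) hk

section Existence

variable {𝕜 : Type*} [Field 𝕜] [LinearOrder 𝕜] [IsStrictOrderedRing 𝕜]

theorem IsLeastConcaveMajorant.prepend_chord {b r : ℕ} {g H : ℕ → 𝕜} {s : 𝕜}
    (hH : IsLeastConcaveMajorant r (fun j => g (b + j)) H)
    (hs : ∀ k ≤ b + r, g k ≤ g 0 + k * s) (hb : g b = g 0 + b * s) :
    IsLeastConcaveMajorant (b + r) g (fun k => if k ≤ b then g 0 + k * s else H (k - b)) := by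
  set G : ℕ → 𝕜 := fun k => if k ≤ b then g 0 + k * s else H (k - b)
  have hleft : ∀ k ≤ b, G k = g 0 + k * s := fun _ hk => if_pos hk
  have hright : ∀ j, G (b + j) = H j := by
    rintro (_ | j)
    · rw [add_zero, hleft b le_rfl, ← hb, hH.eq_zero, add_zero]
    · exact (if_neg (by omega)).trans (congrArg H (by omega))
  have hleft_step : ∀ k, k + 1 ≤ b → G (k + 1) - G k = s := fun k hk => by
    rw [hleft k (by omega), hleft (k + 1) hk]; push_cast; ring
  have hjunction : 1 ≤ r → H 1 - H 0 ≤ s := fun hr => by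
    have hF : ConcaveUpTo r (fun j : ℕ => g b + j * s) := fun _ _ => le_of_eq (by push_cast; ring)
    have hgF : ∀ j ≤ r, g (b + j) ≤ g b + j * s := fun j hj => by
      have := hs (b + j) (by omega); rw [hb]; push_cast at this; linarith
    have h1 : H 1 ≤ g b + 1 * s := by exact_mod_cast hH.le_of_concaveUpTo hF hgF hr
    rw [hH.eq_zero, add_zero]; linarith
  refine ⟨fun k hk => ?_, fun k hk => ?_, ?_, ?_, fun k hk hkink => ?_⟩
  · rcases lt_trichotomy (k + 1) b with hkb | rfl | hbk
    · rw [hleft_step k hkb.le, hleft_step (k + 1) hkb]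
    · rw [hleft_step k le_rfl, show k + 2 = k + 1 + 1 from rfl, hright 1, ← add_zero (k + 1),
        hright 0]
      exact hjunction (by omega)
    · obtain ⟨j, rfl⟩ : ∃ j, k = b + j := ⟨k - b, by omega⟩
      rw [show b + j + 2 = b + (j + 2) from rfl, show b + j + 1 = b + (j + 1) from rfl,
        hright, hright, hright]
      exact hH.concaveUpTo j (by omega)
  · rcases le_or_gt k b with hkb | hbk
    · rw [hleft k hkb]; exact hs k hk
    · obtain ⟨j, rfl⟩ : ∃ j, k = b + j := ⟨k - b, by omega⟩
      rw [hright]; exact hH.le j (by omega)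
  · rw [hleft 0 b.zero_le]; simp
  · rw [hright]; exact hH.eq_last
  · rcases lt_trichotomy (k + 1) b with hkb | rfl | hbk
    · exact absurd (by rw [hleft_step k hkb.le, hleft_step (k + 1) hkb]) hkink
    · rw [hleft (k + 1) le_rfl, hb]
    · obtain ⟨j, rfl⟩ : ∃ j, k = b + j := ⟨k - b, by omega⟩
      rw [show b + j + 2 = b + (j + 2) from rfl, show b + j + 1 = b + (j + 1) from rfl,
        hright, hright, hright] at hkink
      rw [show b + j + 1 = b + (j + 1) from rfl, hright]
      exact hH.eq_of_kink j (by omega) hkink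

theorem exists_isLeastConcaveMajorant (n : ℕ) (g : ℕ → 𝕜) :
    ∃ H, IsLeastConcaveMajorant n g H := by
  induction n using Nat.strong_induction_on generalizing g with
  | _ n ih =>
  rcases n with _ | n
  · exact ⟨g, fun k hk => by omega, fun k _ => le_rfl, rfl, rfl, fun k hk => by omega⟩
  -- the steepest chord out of `(0, g 0)` is the first face of the hull
  obtain ⟨b, hb, hbmax⟩ := (Finset.Icc 1 (n + 1)).exists_max_image
    (fun k : ℕ => (g k - g 0) / k) ⟨1, by simp⟩
  rw [Finset.mem_Icc] at hb
  have hb0 : (0 : 𝕜) < b := by exact_mod_cast hb.1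
  obtain ⟨H, hH⟩ := ih (n + 1 - b) (by omega) (fun j => g (b + j))
  have hglued := hH.prepend_chord (s := (g b - g 0) / b) (fun k hk => ?_) ?_
  · exact ⟨_, Nat.add_sub_cancel' hb.2 ▸ hglued⟩
  · rcases Nat.eq_zero_or_pos k with rfl | hk0
    · simp
    have hkpos : (0 : 𝕜) < k := by exact_mod_cast hk0
    have := hbmax k (Finset.mem_Icc.mpr ⟨hk0, by omega⟩)
    rw [div_le_iff₀ hkpos] at this
    linarith
  · rw [mul_div_cancel₀ _ hb0.ne', add_sub_cancel]

end Existence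

section PartialSums

variable {n : ℕ}

theorem psum_zero (v : Fin n → ℚ) : psum v 0 = 0 := by
  simp [psum]

theorem psum_succ (v : Fin n → ℚ) {k : ℕ} (hk : k < n) :
    psum v (k + 1) = psum v k + v ⟨k, hk⟩ := by
  have : Finset.univ.filter (fun j : Fin n => (j : ℕ) < k + 1)
      = insert ⟨k, hk⟩ (Finset.univ.filter (fun j : Fin n => (j : ℕ) < k)) := by
    ext j
    simp only [Finset.mem_filter, Finset.mem_univ, Finset.mem_insert, Fin.ext_iff, true_and]
    omega
  rw [psum, this, Finset.sum_insert (by simp), add_comm, psum]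

theorem psum_increments (H : ℕ → ℚ) {k : ℕ} (hk : k ≤ n) :
    psum (fun j : Fin n => H (j + 1) - H j) k = H k - H 0 := by
  induction k with
  | zero => rw [psum_zero, sub_self]
  | succ k ih => rw [psum_succ _ (by omega), ih (by omega)]; ring

end PartialSums

namespace Bset

variable (m n : ℕ) (μ : Fin n → ℤ)

def bound (k : ℕ) : ℚ := psum (fun i => (μ i : ℚ)) k + ((k : ℚ) * (m : ℚ)) / (n : ℚ)

def floorBound (k : ℕ) : ℚ := if 0 < k ∧ k < n then ⌊bound m n μ k⌋ else bound m n μ k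

theorem bound_succ_sub {k : ℕ} (hk : k < n) :
    bound m n μ (k + 1) - bound m n μ k = μ ⟨k, hk⟩ + (m : ℚ) / n := by
  rw [bound, bound, psum_succ _ hk]; push_cast; ring

theorem concaveUpTo_bound (hμ : Antitone μ) : ConcaveUpTo n (bound m n μ) := fun k hk => by
  rw [bound_succ_sub m n μ (by omega), bound_succ_sub m n μ (by omega), add_le_add_iff_right,
    Int.cast_le]
  exact hμ (Fin.mk_le_mk.mpr k.le_succ)

theorem floorBound_le (k : ℕ) : floorBound m n μ k ≤ bound m n μ k := by
  unfold floorBound; split_ifs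
  · exact Int.floor_le _
  · exact le_rfl

theorem floorBound_zero : floorBound m n μ 0 = 0 := by
  simp [floorBound, bound, psum_zero]

theorem floorBound_last (hn : 0 < n) :
    floorBound m n μ n = psum (fun i => (μ i : ℚ)) n + m := by
  simp [floorBound, bound, hn.ne']

variable {m n μ}

theorem mem_of_isLeastConcaveMajorant (hn : 0 < n) (hμ : Antitone μ) {H : ℕ → ℚ}
    (hH : IsLeastConcaveMajorant n (floorBound m n μ) H) :
    (fun j : Fin n => H (j + 1) - H j) ∈ Bset m n μ := by
  have hpsum : ∀ k ≤ n, psum (fun j : Fin n => H (j + 1) - H j) k = H k := fun k hk => by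
    rw [psum_increments H hk, hH.eq_zero, floorBound_zero, sub_zero]
  refine ⟨fun i j hij => hH.concaveUpTo.increment_antitone hij j.isLt, ?_, fun k _ hk => ?_,
    fun j hj hlt => ⟨⌊bound m n μ (j + 1)⌋, ?_⟩⟩
  · rw [hpsum n le_rfl, hH.eq_last, floorBound_last m n μ hn]
  · rw [hpsum k (by omega)]
    exact hH.le_of_concaveUpTo (concaveUpTo_bound m n μ hμ) (fun k _ => floorBound_le m n μ k)
      (by omega)
  · rw [hpsum _ hj.le, hH.eq_of_kink j hj hlt.ne, floorBound, if_pos ⟨j.val.succ_pos, hj⟩]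

theorem psum_le_of_mem (hn : 0 < n) {H : ℕ → ℚ}
    (hH : IsLeastConcaveMajorant n (floorBound m n μ) H) {v : Fin n → ℚ} (hv : v ∈ Bset m n μ)
    {k : ℕ} (hk : k ≤ n) : psum v k ≤ H k := by
  obtain ⟨hva, hvsum, hvbound, hvint⟩ := hv
  refine hH.concaveUpTo.le_of_le_at_kinks (φ := psum v) ?_ ?_ (fun i hi hkink => ?_) hk
  · rw [psum_zero, hH.eq_zero, floorBound_zero]
  · rw [hvsum, hH.eq_last, floorBound_last m n μ hn]
  -- a kink of `psum v` is a strict descent of `v`, where `psum v` is an integer below `bound`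
  rw [show i + 2 = i + 1 + 1 from rfl, psum_succ v (show i + 1 < n by omega),
    psum_succ v (show i < n by omega), add_sub_cancel_left, add_sub_cancel_left] at hkink
  obtain ⟨z, hz⟩ := hvint ⟨i, by omega⟩ (show i + 1 < n by omega)
    (lt_of_le_of_ne (hva (Fin.mk_le_mk.mpr i.le_succ)) hkink)
  have hzb : (z : ℚ) ≤ bound m n μ (i + 1) := hz ▸ hvbound (i + 1) (by omega) (by omega)
  calc psum v (i + 1) = z := hz
    _ ≤ floorBound m n μ (i + 1) := by
      rw [floorBound, if_pos ⟨i.succ_pos, by omega⟩]; exact_mod_cast Int.le_floor.mpr hzb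
    _ ≤ H (i + 1) := hH.le _ (by omega)

end Bset

theorem maximal_element_of_Bset_general (m n : ℕ) (hmn : m < n) (μ : Fin n → ℤ) (hμ : Antitone μ) :
    ∃ ν ∈ Bset m n μ, ∀ v ∈ Bset m n μ, ∀ k : ℕ, 1 ≤ k → k ≤ n →
      psum v k ≤ psum ν k := by
  have hn : 0 < n := by omega
  obtain ⟨H, hH⟩ := exists_isLeastConcaveMajorant n (Bset.floorBound m n μ)
  refine ⟨_, Bset.mem_of_isLeastConcaveMajorant hn hμ hH, fun v hv k _ hk => ?_⟩
  rw [psum_increments H hk, hH.eq_zero, Bset.floorBound_zero, sub_zero]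
  exact Bset.psum_le_of_mem hn hH hv hk

/-- For coprime `0 < m < n` and dominant `μ ∈ ℤⁿ`, the set `B(μ,m,n)`
contains a unique maximal element with respect to the dominance order: there exists
`ν ∈ B(μ,m,n)` such that every `v ∈ B(μ,m,n)` satisfies
`Σ_{j=1}^k v_j ≤ Σ_{j=1}^k ν_j` for all `k ∈ {1,…,n}`. -/
theorem maximal_element_of_Bset (m n : ℕ) (hm : 0 < m) (hmn : m < n)
    (hcop : Nat.Coprime m n) (μ : Fin n → ℤ) (hμ : Antitone μ) :
    ∃ ν ∈ Bset m n μ, ∀ v ∈ Bset m n μ, ∀ k : ℕ, 1 ≤ k → k ≤ n →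
      psum v k ≤ psum ν k :=
  maximal_element_of_Bset_general m n hmn μ hμ
end

section
/- Let n ≥ 1 and 0 < m < n be integers, and let μ ∈ ℤ^n be dominant. Let v ∈ ℚ^n be dominant. Then the following are equivalent: (1) there exists w = (γ, x) ∈ ℤ^n ⋊ S_n with Σ_{j=1}^n γ_j = Σ_{j=1}^n μ_j such that the dominant Newton point of w·σ_{m,n} equals v; (2) Σ_{j=1}^n v_j = Σ_{j=1}^n μ_j + m, and Σ_{j=1}^k v_j ∈ ℤ for every k ∈ {1,…,n−1} with v_k > v_{k+1}. -/
/-- The action of `S_n` on `ℚⁿ`: `(x • λ)_i = λ_{x⁻¹(i)}`. -/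
def permAct {n : ℕ} (x : Equiv.Perm (Fin n)) (l : Fin n → ℚ) : Fin n → ℚ :=
  fun i => l (x⁻¹ i)

/-- Multiplication in the (extended affine Weyl) group `ℚⁿ ⋊ Sₙ`:
`(λ, x)(λ', x') = (λ + x·λ', xx')`. Elements `(λ, 1)` are the translations `t^λ`. -/
def Wmul {n : ℕ} (w w' : (Fin n → ℚ) × Equiv.Perm (Fin n)) :
    (Fin n → ℚ) × Equiv.Perm (Fin n) :=
  (w.1 + permAct w.2 w'.1, w.2 * w'.2)

/-- The Newton point of `w = (λ, y) ∈ ℚⁿ ⋊ Sₙ`: `ν_w = (Σ_{k=0}^{N-1} y^k·λ)/N`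
for `N = orderOf y` (which satisfies `y^N = 1`). -/
noncomputable def newtonPt {n : ℕ} (w : (Fin n → ℚ) × Equiv.Perm (Fin n)) : Fin n → ℚ :=
  fun i => (∑ k ∈ Finset.range (orderOf w.2), w.1 ((w.2 ^ k)⁻¹ i)) / (orderOf w.2 : ℚ)

/-- The weakly decreasing rearrangement of a vector `v ∈ ℚⁿ`. -/
def domRearrange {n : ℕ} (v : Fin n → ℚ) : Fin n → ℚ :=
  v ∘ Tuple.sort (fun i => -v i)

/-- `ϖ_{m,n} = (1,…,1,0,…,0)` with `m` ones. -/
def varpi (m n : ℕ) : Fin n → ℚ := fun i => if (i : ℕ) < m then 1 else 0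

/-- `σ_{m,n} = t^{ϖ_{m,n}} u_{m,n}`, where `u_{m,n}` sends `i` to `i + m mod n`. -/
def sigmaW (m n : ℕ) : (Fin n → ℚ) × Equiv.Perm (Fin n) :=
  (varpi m n, (finRotate n) ^ m)


/-! The Newton point of `(λ, y)` averages `λ` along the `y`-orbits, so it is `y`-invariant and
its sum over any `y`-stable set equals that of `λ`. For integral `λ` the superlevel sets of the
Newton point are `y`-stable, so the partial sums of its dominant rearrangement are integral at
every descent. Conversely, if `v` is dominant with integral partial sums at its descents, every
level set of `v` is an interval with integral sum; let `y` cycle each level set and let `λ` carry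
the sum of each level set on its first entry: the Newton point of `(λ, y)` is then `v`.
Finally `(γ, x) ↦ (γ, x) σ_{m,n} = (γ + x·ϖ_{m,n}, x u_{m,n})` is a bijection of `ℤⁿ ⋊ Sₙ` raising
the coordinate sum by `m`. -/

open Finset

section

variable {n : ℕ}

theorem psum_self (v : Fin n → ℚ) : psum v n = ∑ i, v i := by
  simp [psum]

theorem filter_lt_apply_eq_filter_val_lt {v : Fin n → ℚ} (hv : Antitone v) {j : Fin n}
    (h : (j : ℕ) + 1 < n) (hlt : v ⟨j + 1, h⟩ < v j) :
    univ.filter (fun i => v ⟨j + 1, h⟩ < v i) = univ.filter (fun i : Fin n => (i : ℕ) < j + 1) := by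
  ext i
  simp only [mem_filter, mem_univ, true_and]
  constructor
  · intro hi
    by_contra! hji
    exact (hv (show (⟨j + 1, h⟩ : Fin n) ≤ i from hji)).not_gt hi
  · intro hi
    exact hlt.trans_le (hv (show i ≤ j from Nat.lt_succ_iff.mp hi))

theorem newtonPt_apply_snd (w : (Fin n → ℚ) × Equiv.Perm (Fin n)) (i : Fin n) :
    newtonPt w (w.2 i) = newtonPt w i := by
  obtain ⟨l, y⟩ := w
  simp only [newtonPt]
  congr 1
  have hshift : ∀ k, l ((y ^ (k + 1))⁻¹ (y i)) = l ((y ^ k)⁻¹ i) := fun k => by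
    simp [pow_succ', mul_inv_rev]
  have hper : l ((y ^ orderOf y)⁻¹ (y i)) = l ((y ^ 0)⁻¹ (y i)) := by
    rw [pow_orderOf_eq_one, pow_zero]
  have h₁ := sum_range_succ (fun k => l ((y ^ k)⁻¹ (y i))) (orderOf y)
  have h₂ := sum_range_succ' (fun k => l ((y ^ k)⁻¹ (y i))) (orderOf y)
  simp only [hshift] at h₂
  linarith

theorem sum_newtonPt_of_mem_iff (w : (Fin n → ℚ) × Equiv.Perm (Fin n)) {S : Finset (Fin n)}
    (hS : ∀ i, w.2 i ∈ S ↔ i ∈ S) : ∑ i ∈ S, newtonPt w i = ∑ i ∈ S, w.1 i := by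
  obtain ⟨l, y⟩ := w
  have hpow : ∀ k : ℕ, ∀ i, (y ^ k) i ∈ S ↔ i ∈ S := by
    intro k
    induction k with
    | zero => simp
    | succ k ih => intro i; rw [pow_succ', Equiv.Perm.mul_apply, hS, ih]
  have hterm : ∀ k : ℕ, ∑ i ∈ S, l ((y ^ k)⁻¹ i) = ∑ i ∈ S, l i := fun k =>
    sum_equiv (y ^ k)⁻¹ (fun i => by simpa using hpow k ((y ^ k)⁻¹ i)) (fun _ _ => rfl)
  have hN : (orderOf y : ℚ) ≠ 0 := by exact_mod_cast (orderOf_pos y).ne'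
  simp only [newtonPt]
  rw [← sum_div, sum_comm, sum_congr rfl (fun k _ => hterm k), sum_const, card_range,
    nsmul_eq_mul, mul_div_cancel_left₀ _ hN]

theorem antitone_domRearrange (v : Fin n → ℚ) : Antitone (domRearrange v) := fun _ _ hij =>
  neg_le_neg_iff.mp (Tuple.monotone_sort (fun i => -v i) hij)

theorem domRearrange_of_antitone {v : Fin n → ℚ} (hv : Antitone v) : domRearrange v = v := by
  have : Monotone (fun i => -v i) := fun _ _ hij => neg_le_neg (hv hij)
  simp [domRearrange, Tuple.sort_eq_refl_iff_monotone.mpr this]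

theorem sum_filter_domRearrange (v : Fin n → ℚ) (p : ℚ → Prop) [DecidablePred p] :
    ∑ i ∈ univ.filter (fun i => p (domRearrange v i)), domRearrange v i =
      ∑ i ∈ univ.filter (fun i => p (v i)), v i :=
  sum_equiv (Tuple.sort fun i => -v i) (fun _ => by simp only [mem_filter, mem_univ, true_and]; rfl)
    (fun _ _ => rfl)

theorem psum_domRearrange_newtonPt_self (Λ : Fin n → ℤ) (y : Equiv.Perm (Fin n)) :
    psum (domRearrange (newtonPt (fun i => (Λ i : ℚ), y))) n = ((∑ i, Λ i : ℤ) : ℚ) := by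
  simp only [psum_self, domRearrange, Function.comp_apply, Equiv.sum_comp]
  rw [sum_newtonPt_of_mem_iff (S := univ) _ (by simp)]
  push_cast
  rfl

theorem exists_psum_domRearrange_newtonPt_eq_intCast (Λ : Fin n → ℤ) (y : Equiv.Perm (Fin n))
    (j : Fin n) (h : (j : ℕ) + 1 < n)
    (hlt : domRearrange (newtonPt (fun i => (Λ i : ℚ), y)) ⟨j + 1, h⟩ <
      domRearrange (newtonPt (fun i => (Λ i : ℚ), y)) j) :
    ∃ z : ℤ, psum (domRearrange (newtonPt (fun i => (Λ i : ℚ), y))) (j + 1) = z := by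
  set ν := newtonPt (fun i => (Λ i : ℚ), y)
  set c := domRearrange ν ⟨j + 1, h⟩
  have hstable : ∀ i, y i ∈ univ.filter (fun i => c < ν i) ↔ i ∈ univ.filter (fun i => c < ν i) :=
    fun i => by simp only [mem_filter, mem_univ, true_and, ν, newtonPt_apply_snd (_, y) i]
  refine ⟨∑ i ∈ univ.filter (fun i => c < ν i), Λ i, ?_⟩
  rw [psum, ← filter_lt_apply_eq_filter_val_lt (antitone_domRearrange ν) h hlt,
    sum_filter_domRearrange ν (c < ·), sum_newtonPt_of_mem_iff _ hstable]
  push_cast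
  rfl

end

section levels

variable {n : ℕ} {v : Fin n → ℚ}

theorem apply_eq_apply_of_forall_succ {β : Type*} (hv : Antitone v) {g : Fin n → β}
    (hg : ∀ (i : Fin n) (h : (i : ℕ) + 1 < n), v ⟨i + 1, h⟩ = v i → g ⟨i + 1, h⟩ = g i)
    {i j : Fin n} (hij : v i = v j) : g i = g j := by
  wlog hle : i ≤ j generalizing i j
  · exact (this hij.symm (le_of_not_ge hle)).symm
  suffices ∀ d (k : Fin n), (k : ℕ) = i + d → v k = v i → g k = g i from
    (this (j - i) j (by omega) hij.symm).symm
  intro d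
  induction d with
  | zero => intro k hk _; rw [show k = i from Fin.ext hk]
  | succ d ih =>
    intro k hk hvk
    have hd : (i : ℕ) + d < n := by omega
    have hd' : (i : ℕ) + d + 1 < n := by omega
    have hsucc : k = ⟨(i + d : ℕ) + 1, hd'⟩ := Fin.ext (by rw [hk]; rfl)
    have hprev : v ⟨i + d, hd⟩ = v i :=
      le_antisymm (hv (show i ≤ ⟨i + d, hd⟩ from Nat.le_add_right _ _))
        (hvk ▸ hv (show ⟨i + d, hd⟩ ≤ k by change (i : ℕ) + d ≤ k; omega))
    rw [hsucc, hg ⟨i + d, hd⟩ hd' (by rw [← hsucc, hvk, hprev]), ih _ rfl hprev]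

variable (v) in
def levelMin (i : Fin n) : Fin n :=
  (univ.filter fun j => v j = v i).min' ⟨i, by simp⟩

theorem apply_levelMin (i : Fin n) : v (levelMin v i) = v i :=
  (mem_filter.mp (min'_mem (univ.filter fun j => v j = v i) _)).2

theorem levelMin_le {i j : Fin n} (h : v j = v i) : levelMin v i ≤ j :=
  min'_le _ _ (by simp [h])

theorem levelMin_congr {i j : Fin n} (h : v i = v j) : levelMin v i = levelMin v j := by
  simp only [levelMin, h]

variable (v) in
def levelShiftFun (i : Fin n) : Fin n :=
  if h : ∃ h : (i : ℕ) + 1 < n, v ⟨i + 1, h⟩ = v i then ⟨i + 1, h.1⟩ else levelMin v i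

theorem apply_levelShiftFun (i : Fin n) : v (levelShiftFun v i) = v i := by
  unfold levelShiftFun
  split_ifs with h
  exacts [h.2, apply_levelMin i]

theorem le_of_not_exists_apply_succ_eq (hv : Antitone v) {i j : Fin n}
    (h : ¬∃ h : (i : ℕ) + 1 < n, v ⟨i + 1, h⟩ = v i) (hij : v j = v i) : j ≤ i := by
  by_contra! hlt
  have hi : (i : ℕ) + 1 < n := by omega
  exact h ⟨hi, le_antisymm (hv (show i ≤ ⟨i + 1, hi⟩ from Nat.le_succ _))
    (hij ▸ hv (show ⟨i + 1, hi⟩ ≤ j from hlt))⟩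

theorem levelShiftFun_injective (hv : Antitone v) : Function.Injective (levelShiftFun v) := by
  intro a b hab
  have hvab : v a = v b := by
    rw [← apply_levelShiftFun (v := v) a, hab, apply_levelShiftFun (v := v) b]
  unfold levelShiftFun at hab
  split_ifs at hab with ha hb hb
  · exact Fin.ext (by simpa using congrArg Fin.val hab)
  · have := levelMin_le (v := v) hvab
    rw [← hab, Fin.le_def] at this
    simp at this
  · have := levelMin_le (v := v) hvab.symm
    rw [hab, Fin.le_def] at this
    simp at this
  · exact le_antisymm (le_of_not_exists_apply_succ_eq hv hb hvab)
      (le_of_not_exists_apply_succ_eq hv ha hvab.symm)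

/-- On each level set of `v` (an interval), this permutation is the cyclic shift `i ↦ i + 1`. -/
noncomputable def levelShift (hv : Antitone v) : Equiv.Perm (Fin n) :=
  Equiv.ofBijective _ (levelShiftFun_injective hv).bijective_of_finite

theorem apply_levelShift (hv : Antitone v) (i : Fin n) : v (levelShift hv i) = v i :=
  apply_levelShiftFun i

theorem levelShift_apply_of_eq (hv : Antitone v) {i : Fin n} (h : (i : ℕ) + 1 < n)
    (heq : v ⟨i + 1, h⟩ = v i) : levelShift hv i = ⟨i + 1, h⟩ :=
  dif_pos ⟨h, heq⟩

end levels

section integrality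

variable {n : ℕ} {v : Fin n → ℚ}

theorem exists_sum_eq_intCast_of_upward_closed (hv : Antitone v) (htot : ∃ z : ℤ, psum v n = z)
    (hbreak : ∀ (j : Fin n) (h : (j : ℕ) + 1 < n), v ⟨j + 1, h⟩ < v j →
      ∃ z : ℤ, psum v (j + 1) = z)
    {U : Finset (Fin n)} (hU : ∀ i j, v i ≤ v j → i ∈ U → j ∈ U) :
    ∃ z : ℤ, ∑ i ∈ U, v i = z := by
  rcases U.eq_empty_or_nonempty with rfl | hne
  · exact ⟨0, by simp⟩
  set j := U.max' hne
  by_cases hj : (j : ℕ) + 1 < n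
  · have hnext : (⟨j + 1, hj⟩ : Fin n) ∉ U := fun h =>
      (U.le_max' _ h).not_gt (show j < ⟨j + 1, hj⟩ from Nat.lt_succ_self _)
    have hlt : v ⟨j + 1, hj⟩ < v j :=
      lt_of_not_ge fun hle => hnext (hU _ _ hle (U.max'_mem hne))
    have hUeq : U = univ.filter (fun i => v ⟨j + 1, hj⟩ < v i) := by
      ext i
      simp only [mem_filter, mem_univ, true_and]
      refine ⟨fun hi => hlt.trans_le (hv (U.le_max' i hi)), fun hi => hU j i ?_ (U.max'_mem hne)⟩
      refine hv (le_of_not_gt fun hji => ?_)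
      exact (hv (show (⟨j + 1, hj⟩ : Fin n) ≤ i from hji)).not_gt hi
    rw [hUeq, filter_lt_apply_eq_filter_val_lt hv hj hlt]
    exact hbreak j hj hlt
  · have hUeq : U = univ := eq_univ_of_forall fun i =>
      hU j i (hv (show i ≤ j by change (i : ℕ) ≤ j; omega)) (U.max'_mem hne)
    rw [hUeq, ← psum_self]
    exact htot

theorem exists_sum_level_eq_intCast (hv : Antitone v) (htot : ∃ z : ℤ, psum v n = z)
    (hbreak : ∀ (j : Fin n) (h : (j : ℕ) + 1 < n), v ⟨j + 1, h⟩ < v j →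
      ∃ z : ℤ, psum v (j + 1) = z) (c : ℚ) :
    ∃ z : ℤ, ∑ i ∈ univ.filter (fun i => v i = c), v i = z := by
  obtain ⟨z₁, hz₁⟩ := exists_sum_eq_intCast_of_upward_closed hv htot hbreak
    (U := univ.filter (fun i => c ≤ v i))
    (by simp only [mem_filter, mem_univ, true_and]; exact fun _ _ hij hi => hi.trans hij)
  obtain ⟨z₂, hz₂⟩ := exists_sum_eq_intCast_of_upward_closed hv htot hbreak
    (U := univ.filter (fun i => c < v i))
    (by simp only [mem_filter, mem_univ, true_and]; exact fun _ _ hij hi => hi.trans_le hij)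
  refine ⟨z₁ - z₂, ?_⟩
  rw [sum_filter] at hz₁ hz₂ ⊢
  rw [Int.cast_sub, ← hz₁, ← hz₂, eq_sub_iff_add_eq, ← sum_add_distrib]
  refine sum_congr rfl fun i _ => ?_
  rcases lt_trichotomy (v i) c with h | h | h
  · simp [h.ne, h.not_ge, h.not_gt]
  · simp [h]
  · simp [h.ne', h.le, h]

theorem exists_int_sum_level_eq (hv : Antitone v) (htot : ∃ z : ℤ, psum v n = z)
    (hbreak : ∀ (j : Fin n) (h : (j : ℕ) + 1 < n), v ⟨j + 1, h⟩ < v j →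
      ∃ z : ℤ, psum v (j + 1) = z) :
    ∃ Λ : Fin n → ℤ, ∀ i, ∑ j ∈ univ.filter (fun j => v j = v i), (Λ j : ℚ) =
      ∑ j ∈ univ.filter (fun j => v j = v i), v j := by
  -- concentrate the sum of each level set on its least element
  refine ⟨fun i => if levelMin v i = i then ⌊∑ j ∈ univ.filter (fun j => v j = v i), v j⌋ else 0,
    fun i => ?_⟩
  obtain ⟨z, hz⟩ := exists_sum_level_eq_intCast hv htot hbreak (v i)
  rw [← Int.cast_sum, sum_congr rfl (g := fun j => if levelMin v i = j then z else 0), sum_ite_eq,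
    if_pos (by simpa using apply_levelMin i), hz]
  intro j hj
  rw [mem_filter] at hj
  simp only [hj.2, levelMin_congr hj.2, hz, Int.floor_intCast]

theorem newtonPt_levelShift (hv : Antitone v) (Λ : Fin n → ℤ)
    (hΛ : ∀ i, ∑ j ∈ univ.filter (fun j => v j = v i), (Λ j : ℚ) =
      ∑ j ∈ univ.filter (fun j => v j = v i), v j) :
    newtonPt (fun i => (Λ i : ℚ), levelShift hv) = v := by
  funext i
  set ν := newtonPt (fun i => (Λ i : ℚ), levelShift hv)
  set S := univ.filter (fun j => v j = v i)
  have hconst : ∀ j ∈ S, ν j = ν i := fun j hj =>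
    apply_eq_apply_of_forall_succ hv (fun k h heq => by
      rw [← levelShift_apply_of_eq hv h heq]; exact newtonPt_apply_snd _ k) (mem_filter.mp hj).2
  have hsum : ∑ j ∈ S, ν j = ∑ j ∈ S, v j :=
    (sum_newtonPt_of_mem_iff _ fun j => by simp [S, apply_levelShift]).trans (hΛ i)
  rw [sum_congr rfl hconst, sum_congr rfl fun j hj => (mem_filter.mp hj).2, sum_const,
    sum_const] at hsum
  exact smul_right_injective ℚ (card_ne_zero.mpr ⟨i, by simp [S]⟩) hsum

end integrality

theorem exists_domRearrange_newtonPt_eq_iff {n : ℕ} {v : Fin n → ℚ} (hv : Antitone v) (s : ℤ) :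
    (∃ (Λ : Fin n → ℤ) (y : Equiv.Perm (Fin n)),
      ∑ i, Λ i = s ∧ domRearrange (newtonPt (fun i => (Λ i : ℚ), y)) = v) ↔
    (psum v n = s ∧ ∀ (j : Fin n) (h : (j : ℕ) + 1 < n), v ⟨j + 1, h⟩ < v j →
      ∃ z : ℤ, psum v (j + 1) = z) := by
  constructor
  · rintro ⟨Λ, y, rfl, rfl⟩
    exact ⟨psum_domRearrange_newtonPt_self Λ y, exists_psum_domRearrange_newtonPt_eq_intCast Λ y⟩
  · rintro ⟨htot, hbreak⟩
    obtain ⟨Λ, hΛ⟩ := exists_int_sum_level_eq hv ⟨s, htot⟩ hbreak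
    have hν : domRearrange (newtonPt (fun i => (Λ i : ℚ), levelShift hv)) = v := by
      rw [newtonPt_levelShift hv Λ hΛ, domRearrange_of_antitone hv]
    refine ⟨Λ, levelShift hv, ?_, hν⟩
    have := psum_domRearrange_newtonPt_self Λ (levelShift hv)
    rw [hν, htot] at this
    exact_mod_cast this.symm

theorem Wmul_sigmaW {m n : ℕ} (γ : Fin n → ℤ) (x : Equiv.Perm (Fin n)) :
    Wmul (fun i => (γ i : ℚ), x) (sigmaW m n) =
      (fun i => ((γ i + if ((x⁻¹ i : Fin n) : ℕ) < m then 1 else 0 : ℤ) : ℚ),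
        x * finRotate n ^ m) := by
  refine Prod.ext (funext fun i => ?_) rfl
  simp only [Wmul, sigmaW, permAct, varpi, Pi.add_apply]
  split_ifs <;> simp

theorem sum_ite_val_perm_inv_lt {m n : ℕ} (hmn : m ≤ n) (x : Equiv.Perm (Fin n)) :
    ∑ i, (if ((x⁻¹ i : Fin n) : ℕ) < m then 1 else 0 : ℤ) = m := by
  rw [Equiv.sum_comp x⁻¹ (fun j : Fin n => if (j : ℕ) < m then (1 : ℤ) else 0), sum_boole,
    Fin.card_filter_val_lt, min_eq_right hmn]

theorem newton_point_criterion_general (m n : ℕ) (hmn : m < n)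
    (μ : Fin n → ℤ) (v : Fin n → ℚ) (hv : Antitone v) :
    (∃ (γ : Fin n → ℤ) (x : Equiv.Perm (Fin n)),
      (∑ j, γ j) = (∑ j, μ j) ∧
      domRearrange (newtonPt (Wmul (fun i => (γ i : ℚ), x) (sigmaW m n))) = v) ↔
    (psum v n = psum (fun i => (μ i : ℚ)) n + (m : ℚ) ∧
      ∀ j : Fin n, ∀ h : (j : ℕ) + 1 < n,
        v ⟨(j : ℕ) + 1, h⟩ < v j → ∃ z : ℤ, psum v ((j : ℕ) + 1) = (z : ℚ)) := by
  have hsum := sum_ite_val_perm_inv_lt hmn.le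
  rw [psum_self (fun i => (μ i : ℚ)), show ∑ i, (μ i : ℚ) + m = ((∑ i, μ i + m : ℤ) : ℚ) by
    push_cast; rfl, ← exists_domRearrange_newtonPt_eq_iff hv]
  constructor
  · rintro ⟨γ, x, hγ, hν⟩
    refine ⟨_, x * finRotate n ^ m, ?_, by rwa [← Wmul_sigmaW]⟩
    rw [sum_add_distrib, hγ, hsum]
  · rintro ⟨Λ, y, hΛ, hν⟩
    set x := y * (finRotate n ^ m)⁻¹
    refine ⟨fun i => Λ i - if ((x⁻¹ i : Fin n) : ℕ) < m then 1 else 0, x, ?_, ?_⟩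
    · rw [sum_sub_distrib, hΛ, hsum, add_sub_cancel_right]
    · rw [Wmul_sigmaW]
      simpa [x] using hν

/-- Let `0 < m < n`, `μ ∈ ℤⁿ` dominant and `v ∈ ℚⁿ` dominant. Then
`v` is the dominant Newton point of `w σ_{m,n}` for some `w = (γ, x) ∈ ℤⁿ ⋊ Sₙ` with
`Σγ = Σμ` if and only if `Σ_{j=1}^n v_j = Σ_{j=1}^n μ_j + m` and `Σ_{j=1}^k v_j ∈ ℤ`
for every `k ∈ {1,…,n-1}` with `v_k > v_{k+1}`. -/
theorem newton_point_criterion (m n : ℕ) (hn : 1 ≤ n) (hm : 0 < m) (hmn : m < n)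
    (μ : Fin n → ℤ) (hμ : Antitone μ) (v : Fin n → ℚ) (hv : Antitone v) :
    (∃ (γ : Fin n → ℤ) (x : Equiv.Perm (Fin n)),
      (∑ j, γ j) = (∑ j, μ j) ∧
      domRearrange (newtonPt (Wmul (fun i => (γ i : ℚ), x) (sigmaW m n))) = v) ↔
    (psum v n = psum (fun i => (μ i : ℚ)) n + (m : ℚ) ∧
      ∀ j : Fin n, ∀ h : (j : ℕ) + 1 < n,
        v ⟨(j : ℕ) + 1, h⟩ < v j → ∃ z : ℤ, psum v ((j : ℕ) + 1) = (z : ℚ)) :=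
  newton_point_criterion_general m n hmn μ v hv
end

section
/- Let m and n be coprime integers with 0 < m < n. Then for every j ∈ {1,…,n−1}, the a-sequence 𝐚^j of χ_{m,n} is strictly smaller than the a-sequence 𝐚^n of χ_{m,n} in the lexicographic order. (Equivalently, ε_{m,n}(n) = 1.) -/
/-- `chi m n i = ⌊im/n⌋ − ⌊(i−1)m/n⌋` (floor division over `ℤ`); this formula is
automatically `n`-periodic in `i`, so it is the `n`-periodic extension of the values
on `{1,…,n}`. -/
def chi (m n : ℕ) (i : ℤ) : ℤ := Int.fdiv (i * m) n - Int.fdiv ((i - 1) * m) n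

/-- The a-sequence `𝐚^j` of a (periodic) function `χ : ℤ → ℤ`: `𝐚^j(k) = χ(j − k)`. -/
def aSeq (χ : ℤ → ℤ) (j : ℤ) : ℕ → ℤ := fun k => χ (j - k)

/-- Lexicographic order on sequences `ℕ → ℤ`: `f <_lex g` iff there exists `k₀` with
`f k = g k` for all `k < k₀` and `f k₀ < g k₀`. -/
def LexLt (f g : ℕ → ℤ) : Prop :=
  ∃ k₀ : ℕ, (∀ k < k₀, f k = g k) ∧ f k₀ < g k₀

/-- For coprime `0 < m < n` and every `j ∈ {1,…,n−1}`, the a-sequence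
`𝐚^j` of `χ_{m,n}` is strictly smaller than `𝐚^n` in the lexicographic order. -/
theorem aSeq_lt_aSeq_n (m n : ℕ) (hm : 0 < m) (hmn : m < n) (hcop : Nat.Coprime m n) :
    ∀ j : ℕ, 1 ≤ j → j ≤ n - 1 →
      LexLt (aSeq (chi m n) (j : ℤ)) (aSeq (chi m n) (n : ℤ)) := by
  classical
  intro j hj1 hj2
  have hn : 0 < n := hm.trans hmn
  have hnz : (n : ℤ) ≠ 0 := by exact_mod_cast hn.ne'
  have hnpos : (0 : ℤ) < n := by exact_mod_cast hn
  set d : ℕ := n - j with hd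
  have hjd : j + d = n := by omega
  have hd1 : 1 ≤ d := by omega
  have hdn : d < n := by omega
  -- C k = ⌈k m / n⌉
  set C : ℕ → ℤ := fun k => -((-(k * m) : ℤ) / n) with hCdef
  -- subadditivity of the ceiling
  have hsub : ∀ a b : ℕ, C (a + b) ≤ C a + C b := by
    intro a b
    have h1 : ((-(a * m) : ℤ)) / n * n ≤ -(a * m) := Int.ediv_mul_le _ hnz
    have h2 : ((-(b * m) : ℤ)) / n * n ≤ -(b * m) := Int.ediv_mul_le _ hnz
    have h3 : ((-(a * m) : ℤ)) / n + ((-(b * m) : ℤ)) / n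
        ≤ (-(((a + b : ℕ) : ℤ) * m)) / n := by
      rw [Int.le_ediv_iff_mul_le hnpos]
      push_cast
      nlinarith
    simp only [hCdef]
    push_cast at h3 ⊢
    linarith
  -- relation between chi and C
  have hchi : ∀ k : ℕ, chi m n ((n : ℤ) - k) = C (k + 1) - C k := by
    intro k
    have e1 : ((n : ℤ) - k) * m = -((k : ℤ) * m) + m * n := by ring
    have e2 : ((n : ℤ) - k - 1) * m = -(((k : ℤ) + 1) * m) + m * n := by ring
    simp only [chi, Int.fdiv_eq_ediv_of_nonneg _ hnpos.le]
    rw [e1, e2, Int.add_mul_ediv_right _ _ hnz, Int.add_mul_ediv_right _ _ hnz]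
    simp only [hCdef]
    push_cast
    ring
  have hC0 : C 0 = 0 := by simp [hCdef]
  have hCn : C n = m := by
    have e : (-(((n : ℕ) : ℤ) * m)) = (n : ℤ) * (-(m : ℤ)) := by ring
    simp only [hCdef]
    rw [e, Int.mul_ediv_cancel_left _ hnz]
    ring
  -- key value: C d + C j = m + 1
  have hndvd : ∀ i : ℕ, 1 ≤ i → i < n → ¬ ((n : ℤ) ∣ (i : ℤ) * m) := by
    intro i hi1 hin hdvd
    have : (n : ℤ) ∣ (i : ℤ) := by
      have hc : IsCoprime (n : ℤ) (m : ℤ) := by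
        rw [Int.isCoprime_iff_gcd_eq_one]
        simpa [Int.gcd, Nat.coprime_comm] using hcop
      exact hc.dvd_of_dvd_mul_right hdvd
    have hdd : (n : ℕ) ∣ i := by exact_mod_cast this
    have := Nat.le_of_dvd (by omega) hdd
    omega
  have hkey : C d + C j = (m : ℤ) + 1 := by
    set x : ℤ := (d : ℤ) * m with hx
    set y : ℤ := (j : ℤ) * m with hy
    have hxy : x + y = (n : ℤ) * m := by rw [hx, hy]; push_cast [← hjd]; ring
    have hr1 : (-x) % n ≠ 0 := by
      intro h
      exact hndvd d hd1 hdn (Int.dvd_neg.mp (Int.dvd_of_emod_eq_zero h))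
    have hr2 : (-y) % n ≠ 0 := by
      intro h
      exact hndvd j hj1 (by omega) (Int.dvd_neg.mp (Int.dvd_of_emod_eq_zero h))
    have hb1 : 0 ≤ (-x) % n := Int.emod_nonneg _ hnz
    have hb1' : (-x) % n < n := Int.emod_lt_of_pos _ hnpos
    have hb2 : 0 ≤ (-y) % n := Int.emod_nonneg _ hnz
    have hb2' : (-y) % n < n := Int.emod_lt_of_pos _ hnpos
    have hsum : ((-x) % n + (-y) % n) % n = 0 := by
      rw [← Int.add_emod]
      have e : -x + -y = (n : ℤ) * (-(m : ℤ)) := by rw [← neg_add, hxy]; ring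
      rw [e]
      exact Int.mul_emod_right _ _
    have hsumn : (-x) % n + (-y) % n = n := by
      obtain ⟨c, hc⟩ := Int.dvd_of_emod_eq_zero hsum
      have hs1 : 0 < (-x) % n := lt_of_le_of_ne hb1 (Ne.symm hr1)
      have hs2 : 0 < (-y) % n := lt_of_le_of_ne hb2 (Ne.symm hr2)
      have hc1 : 0 < c := by
        by_contra hcon
        push_neg at hcon
        nlinarith
      have hc2 : c < 2 := by
        by_contra hcon
        push_neg at hcon
        nlinarith
      have : c = 1 := by omega
      rw [hc, this, mul_one]
    have he1 : n * ((-x) / n) + (-x) % n = -x := Int.mul_ediv_add_emod _ _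
    have he2 : n * ((-y) / n) + (-y) % n = -y := Int.mul_ediv_add_emod _ _
    have hq : (n : ℤ) * ((-x) / n + (-y) / n) = (n : ℤ) * (-(m : ℤ) - 1) := by
      have : (n : ℤ) * ((-x) / n) + (n : ℤ) * ((-y) / n) = -x - y - n := by linarith
      rw [mul_add]
      linarith [hxy]
    have hqq : (-x) / n + (-y) / n = -(m : ℤ) - 1 := by
      exact mul_left_cancel₀ hnz hq
    simp only [hCdef]
    have ex : -((d : ℤ) * m) = -x := by rw [hx]
    have ey : -((j : ℤ) * m) = -y := by rw [hy]
    rw [ex, ey]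
    linarith
  set b : ℕ → ℤ := fun k => C (k + 1) - C k with hbdef
  -- telescoping
  have htel : ∀ K : ℕ, (∀ k < K, b (k + d) = b k) → C (K + d) = C K + C d := by
    intro K
    induction K with
    | zero => intro _; simp [hC0]
    | succ K ih =>
      intro h
      have hK := ih (fun k hk => h k (by omega))
      have hb := h K (by omega)
      simp only [hbdef] at hb
      have e : K + 1 + d = K + d + 1 := by omega
      rw [e]
      linarith
  -- existence of a differing index
  have hex : ∃ k, b (k + d) ≠ b k := by
    by_contra h
    push_neg at h
    have := htel j (fun k _ => h _)
    rw [hjd, hCn] at this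
    linarith
  set k₀ := Nat.find hex with hk₀
  have hne : b (k₀ + d) ≠ b k₀ := Nat.find_spec hex
  have heq : ∀ k < k₀, b (k + d) = b k := by
    intro k hk
    by_contra h
    exact Nat.find_min hex (by omega) h
  have htk : C (k₀ + d) = C k₀ + C d := htel k₀ heq
  have hsub' := hsub (k₀ + 1) d
  have hlt : b (k₀ + d) < b k₀ := by
    have e : k₀ + 1 + d = k₀ + d + 1 := by omega
    rw [e] at hsub'
    have hle : b (k₀ + d) ≤ b k₀ := by simp only [hbdef]; linarith
    exact lt_of_le_of_ne hle hne
  have hcast : ∀ k : ℕ, (j : ℤ) - k = (n : ℤ) - ((k + d : ℕ) : ℤ) := by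
    intro k
    have : ((j : ℕ) : ℤ) + d = n := by exact_mod_cast congrArg (Nat.cast : ℕ → ℤ) hjd
    push_cast
    linarith
  have haj : ∀ k : ℕ, aSeq (chi m n) (j : ℤ) k = b (k + d) := by
    intro k
    simp only [aSeq]
    rw [hcast k, hchi (k + d)]
  have han : ∀ k : ℕ, aSeq (chi m n) (n : ℤ) k = b k := by
    intro k
    simp only [aSeq]
    rw [hchi k]
  exact ⟨k₀, fun k hk => by rw [haj, han]; exact heq k hk, by rw [haj, han]; exact hlt⟩
end

section
/- Let m and n be coprime integers with 0 < m < n. Then the a-sequences 𝐚^1, …, 𝐚^n of χ_{m,n} are pairwise distinct, so the lexicographic order restricts to a linear order on them. Consequently there is a unique permutation ε_{m,n} of {1,…,n} such that for all i, j ∈ {1,…,n}, ε_{m,n}(i) < ε_{m,n}(j) if and only if 𝐚^i >_lex 𝐚^j; and this permutation satisfies χ_{m,n}(j) = 1 if and only if ε_{m,n}(j) ≤ m (that is, ε_{m,n} maps χ_{m,n} to ϖ_{m,n} = (1,…,1,0,…,0) with m ones). -/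


lemma dvd_small_eq (n a b : ℤ) (h : n ∣ a - b) (h1 : -n < a - b) (h2 : a - b < n) : a = b := by
  obtain ⟨c, hc⟩ := h
  rcases lt_trichotomy c 0 with hc0 | hc0 | hc0
  · nlinarith
  · rw [hc0, mul_zero] at hc; omega
  · nlinarith

lemma n_mul_chi {m n : ℕ} (hn : 0 < n) (i : ℤ) :
    (n : ℤ) * chi m n i = m + ((i - 1) * m) % n - (i * m) % n := by
  have hn' : (0:ℤ) < n := by exact_mod_cast hn
  unfold chi
  rw [Int.fdiv_eq_ediv_of_nonneg _ hn'.le, Int.fdiv_eq_ediv_of_nonneg _ hn'.le]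
  have h1 := Int.mul_ediv_add_emod (i * m) n
  have h2 := Int.mul_ediv_add_emod ((i - 1) * m) n
  linear_combination h1 - h2

lemma chi_eq {m n : ℕ} (hm : 0 < m) (hmn : m < n) (i : ℤ) :
    chi m n i = if (i * m) % n < m then 1 else 0 := by
  have hn : 0 < n := hm.trans hmn
  have hn' : (0:ℤ) < n := by exact_mod_cast hn
  have key := n_mul_chi (m := m) hn i
  have hr1 : 0 ≤ (i * m) % n := Int.emod_nonneg _ hn'.ne'
  have hr1' : (i * m) % n < n := Int.emod_lt_of_pos _ hn'
  have hr2 : 0 ≤ ((i - 1) * m) % n := Int.emod_nonneg _ hn'.ne'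
  have hr2' : ((i - 1) * m) % n < n := Int.emod_lt_of_pos _ hn'
  have hm' : (0:ℤ) < m := by exact_mod_cast hm
  have hmn' : (m:ℤ) < n := by exact_mod_cast hmn
  set r1 := (i * m) % n with hr1def
  set r2 := ((i - 1) * m) % n with hr2def
  set c := chi m n i with hc
  have hc01 : c = 0 ∨ c = 1 := by
    rcases le_or_gt c (-1) with h | h
    · have := mul_le_mul_of_nonneg_left h hn'.le
      linarith
    · rcases le_or_gt 2 c with h2 | h2
      · have := mul_le_mul_of_nonneg_left h2 hn'.le
        linarith
      · omega
  rcases hc01 with h | h <;> rw [h] at key ⊢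
  · rw [mul_zero] at key
    rw [if_neg]
    omega
  · rw [mul_one] at key
    rw [if_pos]
    omega


lemma n_mul_sum {m n : ℕ} (hn : 0 < n) (i : ℤ) (k : ℕ) :
    (n : ℤ) * ∑ x ∈ Finset.range k, aSeq (chi m n) i x
      = k * m + ((i - k) * m) % n - (i * m) % n := by
  induction k with
  | zero => simp
  | succ k ih =>
    rw [Finset.sum_range_succ, mul_add, ih]
    have h := n_mul_chi (m := m) hn (i - k)
    have ha : aSeq (chi m n) i k = chi m n (i - k) := rfl
    rw [ha, h]
    have e1 : (i - ((k : ℤ) + 1)) = (i - k - 1) := by ring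
    push_cast
    rw [e1]
    ring

lemma exists_orbit {m n : ℕ} (hcop : Nat.Coprime m n) (hn : 0 < n) (i x : ℤ)
    (hx0 : 0 ≤ x) (hxn : x < n) : ∃ k : ℕ, ((i - k) * m) % n = x := by
  have hn' : (0:ℤ) < n := by exact_mod_cast hn
  have hbez : (m : ℤ) * Nat.gcdA m n ≡ 1 [ZMOD n] := by
    have hb := Nat.gcd_eq_gcd_ab m n
    rw [hcop] at hb
    exact Int.modEq_iff_dvd.mpr ⟨Nat.gcdB m n, by push_cast at hb; linarith⟩
  set A := Nat.gcdA m n with hA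
  set t := i - x * A with ht
  have htm : 0 ≤ t % n := Int.emod_nonneg _ hn'.ne'
  refine ⟨(t % n).toNat, ?_⟩
  have hk : ((t % n).toNat : ℤ) = t % n := Int.toNat_of_nonneg htm
  have hmodeq : t % n ≡ t [ZMOD n] := Int.emod_emod_of_dvd t dvd_rfl
  have h1 : i - ((t % n).toNat : ℤ) ≡ i - t [ZMOD n] := by
    rw [hk]; exact Int.ModEq.sub_left i hmodeq
  have h2 : (i - ((t % n).toNat : ℤ)) * m ≡ x * (m * A) [ZMOD n] := by
    calc (i - ((t % n).toNat : ℤ)) * m ≡ (i - t) * m [ZMOD n] := h1.mul_right m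
    _ = x * (A * m) := by rw [ht]; ring
    _ = x * (m * A) := by ring
  have h3 : (i - ((t % n).toNat : ℤ)) * m ≡ x [ZMOD n] :=
    h2.trans (by simpa using (Int.ModEq.mul_left x hbez))
  calc ((i - ((t % n).toNat : ℤ)) * m) % n = x % n := h3
  _ = x := Int.emod_eq_of_lt hx0 hxn


lemma lexLt_irrefl (f : ℕ → ℤ) : ¬ LexLt f f := by
  rintro ⟨k, -, hk⟩; exact lt_irrefl _ hk

lemma lexLt_asymm {f g : ℕ → ℤ} (h : LexLt f g) (h' : LexLt g f) : False := by
  obtain ⟨k₀, h1, h2⟩ := h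
  obtain ⟨k₁, g1, g2⟩ := h'
  rcases lt_trichotomy k₀ k₁ with hlt | rfl | hlt
  · have := g1 k₀ hlt; omega
  · omega
  · have := h1 k₁ hlt; omega

lemma key_lex {m n : ℕ} (hm : 0 < m) (hmn : m < n) (hcop : Nat.Coprime m n)
    (i j : ℤ) (hij : (i * m) % n < (j * m) % n) :
    LexLt (aSeq (chi m n) j) (aSeq (chi m n) i) := by
  have hn : 0 < n := hm.trans hmn
  have hn' : (0:ℤ) < n := by exact_mod_cast hn
  have hm' : (0:ℤ) < m := by exact_mod_cast hm
  have hmn' : (m:ℤ) < n := by exact_mod_cast hmn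
  set s := (i * m) % n with hs
  set t := (j * m) % n with htd
  have hs0 : 0 ≤ s := Int.emod_nonneg _ hn'.ne'
  have htn : t < n := Int.emod_lt_of_pos _ hn'
  -- congruence between the two orbits
  have hcong : ∀ k : ℕ, ((j - k) * m) % n - ((i - k) * m) % n ≡ t - s [ZMOD n] := by
    intro k
    have h1 : ((j - k) * m) % n ≡ (j - k) * m [ZMOD n] := Int.emod_emod_of_dvd _ dvd_rfl
    have h2 : ((i - k) * m) % n ≡ (i - k) * m [ZMOD n] := Int.emod_emod_of_dvd _ dvd_rfl
    have h3 : t ≡ j * m [ZMOD n] := Int.emod_emod_of_dvd _ dvd_rfl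
    have h4 : s ≡ i * m [ZMOD n] := Int.emod_emod_of_dvd _ dvd_rfl
    calc ((j - k) * m) % n - ((i - k) * m) % n
        ≡ (j - k) * m - (i - k) * m [ZMOD n] := h1.sub h2
      _ = j * m - i * m := by ring
      _ ≡ t - s [ZMOD n] := (h3.sub h4).symm
  -- existence of a differing index
  have hdiff : ∃ k : ℕ, aSeq (chi m n) i k ≠ aSeq (chi m n) j k := by
    by_cases hcase : (m:ℤ) + (t - s) ≤ n
    · obtain ⟨k, hk⟩ := exists_orbit hcop hn i ((m:ℤ) - 1) (by linarith) (by linarith)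
      refine ⟨k, ?_⟩
      have hub : 0 ≤ ((j - k) * m) % n := Int.emod_nonneg _ hn'.ne'
      have hub' : ((j - k) * m) % n < n := Int.emod_lt_of_pos _ hn'
      have hv : ((j - k) * m) % n = (m:ℤ) - 1 + (t - s) := by
        refine dvd_small_eq n _ _ ?_ (by linarith) (by linarith)
        have := (hcong k).sub_right (t - s)
        rw [hk] at this
        have h5 : ((j - k) * m) % n - ((m:ℤ) - 1) - (t - s) ≡ 0 [ZMOD n] := by
          calc ((j - k) * m) % n - ((m:ℤ) - 1) - (t - s)
              = ((j - k) * m) % n - ((m:ℤ) - 1) - (t - s) := rfl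
            _ ≡ (t - s) - (t - s) [ZMOD n] := by
                have := hcong k; rw [hk] at this
                exact this.sub_right (t - s)
            _ = 0 := by ring
        have := (Int.modEq_iff_dvd.mp h5.symm)
        simpa [sub_sub] using this
      show chi m n (i - k) ≠ chi m n (j - k)
      rw [chi_eq hm hmn, chi_eq hm hmn, hk, hv]
      rw [if_pos (by linarith), if_neg (by push_neg; linarith)]
      norm_num
    · push_neg at hcase
      obtain ⟨k, hk⟩ := exists_orbit hcop hn i (m:ℤ) (by linarith) (by linarith)
      refine ⟨k, ?_⟩
      have hub : 0 ≤ ((j - k) * m) % n := Int.emod_nonneg _ hn'.ne'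
      have hub' : ((j - k) * m) % n < n := Int.emod_lt_of_pos _ hn'
      have hv : ((j - k) * m) % n = (m:ℤ) + (t - s) - n := by
        refine dvd_small_eq n _ _ ?_ (by linarith) (by linarith)
        have h5 : ((j - k) * m) % n - ((m:ℤ) + (t - s) - n) ≡ 0 [ZMOD n] := by
          calc ((j - k) * m) % n - ((m:ℤ) + (t - s) - n)
              ≡ ((j - k) * m) % n - ((m:ℤ) + (t - s)) [ZMOD n] := by
                have : ((m:ℤ) + (t - s) - n) ≡ (m:ℤ) + (t - s) [ZMOD n] :=
                  Int.modEq_iff_dvd.mpr ⟨1, by ring⟩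
                exact Int.ModEq.rfl.sub this
            _ ≡ (t - s) - (t - s) [ZMOD n] := by
                have := hcong k; rw [hk] at this
                have h6 := this.sub_right (t - s)
                calc ((j - k) * m) % n - ((m:ℤ) + (t - s))
                    = (((j - k) * m) % n - (m:ℤ)) - (t - s) := by ring
                  _ ≡ (t - s) - (t - s) [ZMOD n] := h6
            _ = 0 := by ring
        have := (Int.modEq_iff_dvd.mp h5.symm)
        simpa [sub_sub] using this
      show chi m n (i - k) ≠ chi m n (j - k)
      rw [chi_eq hm hmn, chi_eq hm hmn, hk, hv]
      rw [if_neg (by push_neg; linarith), if_pos (by linarith)]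
      norm_num
  -- take the least differing index
  classical
  refine ⟨Nat.find hdiff, ?_, ?_⟩
  · intro k hk
    have := Nat.find_min hdiff hk
    exact (not_ne_iff.mp this).symm
  · set k₀ := Nat.find hdiff with hk₀
    have hne := Nat.find_spec hdiff
    have hpre : ∀ k < k₀, aSeq (chi m n) i k = aSeq (chi m n) j k := fun k hk =>
      not_ne_iff.mp (Nat.find_min hdiff hk)
    -- values are 0 or 1
    have hvi : aSeq (chi m n) i k₀ = if ((i - k₀) * m) % n < m then 1 else 0 := chi_eq hm hmn _
    have hvj : aSeq (chi m n) j k₀ = if ((j - k₀) * m) % n < m then 1 else 0 := chi_eq hm hmn _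
    by_contra hcon
    push_neg at hcon
    -- then aSeq i k₀ = 0 and aSeq j k₀ = 1
    have hi0 : aSeq (chi m n) i k₀ = 0 ∧ aSeq (chi m n) j k₀ = 1 := by
      rw [hvi, hvj] at hne hcon ⊢
      split_ifs at hne hcon ⊢ <;> omega
    -- prefix sums
    have Si := n_mul_sum (m := m) hn i (k₀ + 1)
    have Sj := n_mul_sum (m := m) hn j (k₀ + 1)
    have hsum : ∑ x ∈ Finset.range (k₀ + 1), aSeq (chi m n) i x
        = (∑ x ∈ Finset.range (k₀ + 1), aSeq (chi m n) j x) - 1 := by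
      rw [Finset.sum_range_succ, Finset.sum_range_succ, hi0.1, hi0.2]
      rw [Finset.sum_congr rfl fun x hx => hpre x (Finset.mem_range.mp hx)]
      ring
    rw [hsum, mul_sub, Sj, mul_one] at Si
    have hu0 : 0 ≤ ((i - (k₀ + 1 : ℕ)) * m) % n := Int.emod_nonneg _ hn'.ne'
    have hv' : ((j - (k₀ + 1 : ℕ)) * m) % n < n := Int.emod_lt_of_pos _ hn'
    push_cast at Si hu0 hv'
    linarith

/-- For coprime `0 < m < n` (indexing `{1,…,n}` by `i.val + 1` for
`i : Fin n`): the a-sequences `𝐚^1, …, 𝐚^n` of `χ_{m,n}` are pairwise distinct; there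
is a unique permutation `ε = ε_{m,n}` of `{1,…,n}` such that `ε i < ε j ↔ 𝐚^i >_lex 𝐚^j`;
and any such `ε` satisfies `χ_{m,n}(j) = 1 ↔ ε(j) ≤ m` (i.e. `ε` maps `χ_{m,n}` to
`ϖ_{m,n} = (1,…,1,0,…,0)` with `m` ones). -/
theorem eps_exists_unique (m n : ℕ) (hm : 0 < m) (hmn : m < n) (hcop : Nat.Coprime m n) :
    (∀ i j : Fin n,
      aSeq (chi m n) ((i : ℕ) + 1) = aSeq (chi m n) ((j : ℕ) + 1) → i = j) ∧
    (∃! ε : Equiv.Perm (Fin n), ∀ i j : Fin n,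
      ε i < ε j ↔ LexLt (aSeq (chi m n) ((j : ℕ) + 1)) (aSeq (chi m n) ((i : ℕ) + 1))) ∧
    (∀ ε : Equiv.Perm (Fin n),
      (∀ i j : Fin n,
        ε i < ε j ↔ LexLt (aSeq (chi m n) ((j : ℕ) + 1)) (aSeq (chi m n) ((i : ℕ) + 1))) →
      ∀ j : Fin n, chi m n ((j : ℕ) + 1) = 1 ↔ ((ε j : ℕ) + 1 ≤ m)) := by
  have hn : 0 < n := hm.trans hmn
  have hn' : (0:ℤ) < n := by exact_mod_cast hn
  -- the residue map
  set R : Fin n → ℕ := fun i => (((i : ℕ) + 1) * m) % n with hR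
  have hRcast : ∀ i : Fin n, (((i : ℕ) + 1 : ℤ) * m) % n = (R i : ℤ) := by
    intro i
    simp only [hR]
    push_cast
    ring_nf
  -- injectivity of the residue map
  have hRinj : ∀ i j : Fin n, R i = R j → i = j := by
    intro i j hij
    have hz : (((i : ℕ) + 1 : ℤ) * m) % n = (((j : ℕ) + 1 : ℤ) * m) % n := by
      rw [hRcast i, hRcast j, hij]
    -- cancel m using Bezout
    have hbez : (m : ℤ) * Nat.gcdA m n ≡ 1 [ZMOD n] := by
      have hb := Nat.gcd_eq_gcd_ab m n
      rw [hcop] at hb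
      exact Int.modEq_iff_dvd.mpr ⟨Nat.gcdB m n, by push_cast at hb; linarith⟩
    have hz' : ((i : ℕ) + 1 : ℤ) ≡ ((j : ℕ) + 1 : ℤ) [ZMOD n] := by
      have h1 : (((i : ℕ) + 1 : ℤ) * m) ≡ (((j : ℕ) + 1 : ℤ) * m) [ZMOD n] := hz
      have h2 := h1.mul_right (Nat.gcdA m n)
      calc ((i : ℕ) + 1 : ℤ) ≡ ((i : ℕ) + 1 : ℤ) * ((m : ℤ) * Nat.gcdA m n) [ZMOD n] := by
            simpa using (Int.ModEq.mul_left ((i : ℕ) + 1 : ℤ) hbez).symm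
        _ = (((i : ℕ) + 1 : ℤ) * m) * Nat.gcdA m n := by ring
        _ ≡ (((j : ℕ) + 1 : ℤ) * m) * Nat.gcdA m n [ZMOD n] := h2
        _ = ((j : ℕ) + 1 : ℤ) * ((m : ℤ) * Nat.gcdA m n) := by ring
        _ ≡ ((j : ℕ) + 1 : ℤ) * 1 [ZMOD n] := Int.ModEq.mul_left _ hbez
        _ = ((j : ℕ) + 1 : ℤ) := by ring
    have hdvd := Int.modEq_iff_dvd.mp hz'
    have hi : (i : ℕ) < n := i.isLt
    have hj : (j : ℕ) < n := j.isLt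
    have : ((i : ℕ) + 1 : ℤ) = ((j : ℕ) + 1 : ℤ) := by
      refine dvd_small_eq n _ _ ?_ ?_ ?_
      · have h9 := dvd_neg.mpr hdvd; rwa [neg_sub] at h9
      · omega
      · omega
    have : (i : ℕ) = (j : ℕ) := by exact_mod_cast (by linarith : ((i:ℕ):ℤ) = (j:ℕ))
    exact Fin.ext this
  -- comparison in terms of R
  have hcmp : ∀ i j : Fin n, R i < R j →
      LexLt (aSeq (chi m n) ((j : ℕ) + 1)) (aSeq (chi m n) ((i : ℕ) + 1)) := by
    intro i j hij
    have : ((((i:ℕ) + 1 : ℤ)) * m) % n < ((((j:ℕ) + 1 : ℤ)) * m) % n := by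
      rw [hRcast i, hRcast j]; exact_mod_cast hij
    exact key_lex hm hmn hcop _ _ this
  have hiff : ∀ i j : Fin n, (R i < R j ↔
      LexLt (aSeq (chi m n) ((j : ℕ) + 1)) (aSeq (chi m n) ((i : ℕ) + 1))) := by
    intro i j
    constructor
    · exact hcmp i j
    · intro hl
      rcases lt_trichotomy (R i) (R j) with h | h | h
      · exact h
      · exact absurd hl (by rw [hRinj i j h]; exact lexLt_irrefl _)
      · exact absurd (hcmp j i h) (fun h' => lexLt_asymm hl h')
  -- part 1: injectivity of a-sequences
  have part1 : ∀ i j : Fin n,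
      aSeq (chi m n) ((i : ℕ) + 1) = aSeq (chi m n) ((j : ℕ) + 1) → i = j := by
    intro i j hseq
    rcases lt_trichotomy (R i) (R j) with h | h | h
    · exact absurd (hcmp i j h) (by rw [hseq]; exact lexLt_irrefl _)
    · exact hRinj i j h
    · exact absurd (hcmp j i h) (by rw [hseq]; exact lexLt_irrefl _)
  -- the permutation
  have hR'inj : Function.Injective (fun i : Fin n => (⟨R i, Nat.mod_lt _ hn⟩ : Fin n)) := by
    intro i j h
    exact hRinj i j (by simpa using congrArg Fin.val h)
  let ε₀ : Equiv.Perm (Fin n) := Equiv.ofBijective _ (Finite.injective_iff_bijective.mp hR'inj)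
  have hε₀ : ∀ i : Fin n, (ε₀ i : ℕ) = R i := fun i => rfl
  have hP₀ : ∀ i j : Fin n, ε₀ i < ε₀ j ↔
      LexLt (aSeq (chi m n) ((j : ℕ) + 1)) (aSeq (chi m n) ((i : ℕ) + 1)) := by
    intro i j
    rw [← hiff i j]
    constructor
    · intro h; exact_mod_cast (Fin.lt_iff_val_lt_val.mp h)
    · intro h; exact Fin.lt_iff_val_lt_val.mpr (by simpa [hε₀] using h)
  -- uniqueness
  have huniq : ∀ ε : Equiv.Perm (Fin n),
      (∀ i j : Fin n, ε i < ε j ↔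
        LexLt (aSeq (chi m n) ((j : ℕ) + 1)) (aSeq (chi m n) ((i : ℕ) + 1))) → ε = ε₀ := by
    intro ε hP
    have hmono : StrictMono (fun x : Fin n => ε₀ (ε.symm x)) := by
      intro x y hxy
      have : ε (ε.symm x) < ε (ε.symm y) := by simpa using hxy
      exact (hP₀ _ _).mpr ((hP _ _).mp this)
    have hsurj : Function.Surjective (fun x : Fin n => ε₀ (ε.symm x)) :=
      (ε.symm.trans ε₀).surjective
    have : ∀ x : Fin n, ε₀ (ε.symm x) = x := by
      intro x
      have h8 := Fin.coe_orderIso_apply (StrictMono.orderIsoOfSurjective _ hmono hsurj) x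
      have h9 : ((StrictMono.orderIsoOfSurjective _ hmono hsurj) x : Fin n) = ε₀ (ε.symm x) :=
        congrFun (StrictMono.coe_orderIsoOfSurjective _ hmono hsurj) x
      exact Fin.ext (by rw [← h9]; exact_mod_cast h8)
    ext i
    have := this (ε i)
    simp only [Equiv.symm_apply_apply] at this
    exact (congrArg Fin.val this.symm) ▸ rfl
  refine ⟨part1, ⟨ε₀, hP₀, huniq⟩, ?_⟩
  -- part 3
  intro ε hP j
  have hεε₀ : ε = ε₀ := huniq ε hP
  have hchi := chi_eq hm hmn (((j:ℕ) + 1 : ℤ))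
  rw [hεε₀]
  rw [hε₀ j]
  constructor
  · intro h1
    rw [hchi] at h1
    by_contra hcon
    rw [if_neg] at h1
    · exact absurd h1 (by norm_num)
    · push_neg
      rw [hRcast j]
      have : (m:ℤ) ≤ (R j : ℤ) := by exact_mod_cast (by omega : m ≤ R j)
      linarith
  · intro h1
    rw [hchi, if_pos]
    rw [hRcast j]
    have : (R j : ℤ) < m := by exact_mod_cast (by omega : R j < m)
    linarith
end

section
/- Let m and n be coprime integers with 0 < m < n. Define (m', n') = f(m,n) and blocks B₀, B₁ as in the context. Then m' and n' are coprime with 0 ≤ m' ≤ n' < n, and the list (χ_{m,n}(1), …, χ_{m,n}(n)) equals the concatenation B_{χ_{m',n'}(1)} ++ B_{χ_{m',n'}(2)} ++ ⋯ ++ B_{χ_{m',n'}(n')}, where χ_{m',n'}(i) = ⌊im'/n'⌋ − ⌊(i−1)m'/n'⌋. -/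
/-- The Euclidean step: `f(m,n) = (m(⌊n/m⌋+1) − n, m)` if `n ≥ 2m`, and
`f(m,n) = (n − (n−m)⌊n/(n−m)⌋, n−m)` if `n < 2m`. -/
def euclStep (m n : ℕ) : ℕ × ℕ :=
  if 2 * m ≤ n then (m * (n / m + 1) - n, m) else (n - (n - m) * (n / (n - m)), n - m)

/-- The blocks `B₁, B₀` associated to `(m,n)` (as lists over `ℤ`): if `n ≥ 2m`, with
`q = ⌊n/m⌋`, `B₁ = (0^{q−1}, 1)` and `B₀ = (0^q, 1)`; if `n < 2m`, with
`q = ⌊n/(n−m)⌋`, `B₁ = (0, 1^q)` and `B₀ = (0, 1^{q−1})`. `block m n b` is `B₁` if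
`b = 1` and `B₀` otherwise. -/
def block (m n : ℕ) (b : ℤ) : List ℤ :=
  if 2 * m ≤ n then
    if b = 1 then List.replicate (n / m - 1) 0 ++ [1] else List.replicate (n / m) 0 ++ [1]
  else
    if b = 1 then 0 :: List.replicate (n / (n - m)) 1
    else 0 :: List.replicate (n / (n - m) - 1) 1

/-! The word `χ_{m,n}(1) ⋯ χ_{m,n}(n)` has its `j`-th letter `1` at position `⌈jn/m⌉`.
When `n ≥ 2m`, write `n = qm + r` and `m' = m - r`; then `⌈jn/m⌉ = j(q+1) - ⌊jm'/m⌋`, so the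
word splits into `m` blocks `0 ⋯ 0 1` whose `j`-th one has length `q + 1 - χ_{m',m}(j)`.
When `n < 2m`, the identity `χ_{m,n}(i) = 1 - χ_{n-m,n}(n+1-i)` exhibits the word as the
reversed complement of the word of `(n - m, n)`, to which the first case applies; reversing and
complementing its blocks turns them into the blocks `0 1 ⋯ 1` of `(m, n)`. -/

lemma List.ofFn_eq_map_range {α : Type*} (n : ℕ) (g : ℕ → α) :
    (List.ofFn fun i : Fin n => g i) = (List.range n).map g := by
  rw [List.ofFn_eq_map, ← List.map_coe_finRange_eq_range, List.map_map]
  rfl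

lemma List.range'_eq_flatten_map_range' (c : ℕ → ℕ) (hc : Monotone c) (N : ℕ) :
    List.range' (c 0) (c N - c 0) =
      ((List.range N).map fun j => List.range' (c j) (c (j + 1) - c j)).flatten := by
  induction N with
  | zero => simp
  | succ N ih =>
    have h0N : c 0 ≤ c N := hc (Nat.zero_le N)
    have hNN : c N ≤ c (N + 1) := hc N.le_succ
    have happ := List.range'_append (s := c 0) (m := c N - c 0) (n := c (N + 1) - c N) (step := 1)
    rw [Nat.one_mul, Nat.add_sub_cancel' h0N,
      show c N - c 0 + (c (N + 1) - c N) = c (N + 1) - c 0 by omega] at happ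
    rw [List.range_succ, List.map_append, List.flatten_append, ← ih, List.map_singleton,
      List.flatten_singleton, happ]

lemma List.map_range'_eq_replicate_append {α : Type*} (x y : α) {a b : ℕ} (hab : a < b) :
    (List.range' a (b - a)).map (fun i => if i + 1 = b then y else x) =
      List.replicate (b - a - 1) x ++ [y] := by
  obtain ⟨k, rfl⟩ : ∃ k, b = a + k + 1 := ⟨b - a - 1, by omega⟩
  rw [show a + k + 1 - a = k + 1 by omega, List.range'_concat, List.map_append]
  simp only [Nat.add_sub_cancel, List.map_singleton, Nat.one_mul]
  congr 1
  rw [List.eq_replicate_iff]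
  refine ⟨by simp, fun z hz => ?_⟩
  obtain ⟨i, hi, rfl⟩ := List.mem_map.mp hz
  rw [List.mem_range'_1] at hi
  exact if_neg (by omega)

lemma Nat.add_one_mul_div_le {m n : ℕ} (h : m ≤ n) (i : ℕ) :
    (i + 1) * m / n ≤ i * m / n + 1 := by
  rcases n.eq_zero_or_pos with rfl | hn
  · simp
  calc (i + 1) * m / n ≤ (i * m + n) / n := Nat.div_le_div_right (by rw [Nat.succ_mul]; omega)
    _ = i * m / n + 1 := Nat.add_div_right _ hn

lemma Nat.galoisConnection_mul_sub_mul_div {m n a b : ℕ} (hm : 0 < m) (hn : 0 < n)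
    (h : a * m = n + b) : GaloisConnection (fun j => j * a - j * b / m) (fun i => i * m / n) := by
  intro j i
  have hjab : j * a * m = j * n + j * b := by rw [Nat.mul_assoc, h]; ring
  simp only
  rw [Nat.le_div_iff_mul_le hn, Nat.sub_le_iff_le_add, ← Nat.sub_le_iff_le_add',
    Nat.le_div_iff_mul_le hm, Nat.sub_mul]
  omega

def christoffelWord (m n : ℕ) : List ℤ :=
  (List.range n).map fun i : ℕ => chi m n ((i : ℤ) + 1)

lemma chi_eq_ediv (m n : ℕ) (i : ℤ) : chi m n i = i * m / n - (i - 1) * m / n := by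
  simp only [chi, Int.fdiv_eq_ediv_of_nonneg _ (Int.natCast_nonneg n)]

lemma chi_natCast_add_one (m n i : ℕ) :
    chi m n ((i : ℤ) + 1) = ((i + 1) * m / n : ℕ) - (i * m / n : ℕ) := by
  rw [chi_eq_ediv]
  push_cast
  ring_nf

lemma chi_natCast_add_one_eq_zero_or_one {m n : ℕ} (h : m ≤ n) (i : ℕ) :
    chi m n ((i : ℤ) + 1) = 0 ∨ chi m n ((i : ℤ) + 1) = 1 := by
  have hle : i * m / n ≤ (i + 1) * m / n := Nat.div_le_div_right (by rw [Nat.succ_mul]; omega)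
  have := Nat.add_one_mul_div_le h i
  rw [chi_natCast_add_one]
  omega

lemma eq_zero_or_one_of_mem_christoffelWord {m n : ℕ} (h : m ≤ n) {b : ℤ}
    (hb : b ∈ christoffelWord m n) : b = 0 ∨ b = 1 := by
  obtain ⟨i, -, rfl⟩ := List.mem_map.mp hb
  exact chi_natCast_add_one_eq_zero_or_one h i

lemma chi_eq_one_sub_chi_sub {m n : ℕ} (h : m ≤ n) (hn : 0 < n) (i : ℤ) :
    chi m n i = 1 - chi (n - m) n (n + 1 - i) := by
  have hn' : (n : ℤ) ≠ 0 := by exact_mod_cast hn.ne'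
  simp only [chi_eq_ediv, Nat.cast_sub h]
  rw [show i * m = -(i * (n - m)) + i * n by ring,
    show (i - 1) * m = (1 - i) * (n - m) + (i - 1) * n by ring,
    show (n + 1 - i) * (n - m) = (1 - i) * (n - m) + (n - m) * n by ring,
    show (n + 1 - i - 1) * (n - m) = -(i * (n - m)) + (n - m) * n by ring]
  simp only [Int.add_mul_ediv_right _ _ hn']
  ring

lemma christoffelWord_eq_map_reverse {m n : ℕ} (h : m ≤ n) :
    christoffelWord m n = (christoffelWord (n - m) n).reverse.map (1 - ·) := by
  apply List.ext_getElem (by simp [christoffelWord])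
  intro i hi _
  simp only [christoffelWord, List.length_map, List.length_range] at hi
  simp only [christoffelWord, List.getElem_map, List.getElem_reverse, List.getElem_range,
    List.length_map, List.length_range]
  rw [chi_eq_one_sub_chi_sub h (by omega)]
  congr 2
  push_cast [show i ≤ n - 1 by omega, show 1 ≤ n by omega]
  ring

lemma chi_eq_ite_of_galoisConnection {m n : ℕ} (h : m ≤ n) {c : ℕ → ℕ}
    (gc : GaloisConnection c fun i => i * m / n) {i j : ℕ} (hji : c j ≤ i)
    (hij : i < c (j + 1)) :
    chi m n ((i : ℤ) + 1) = if i + 1 = c (j + 1) then 1 else 0 := by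
  have hlt : ∀ k, k < c (j + 1) → k * m / n < j + 1 := fun k hk =>
    lt_of_not_ge fun hle => absurd ((gc (j + 1) k).mpr hle) (by omega)
  have hi : i * m / n = j := le_antisymm (Nat.lt_succ_iff.mp (hlt i hij)) ((gc j i).mp hji)
  rw [chi_natCast_add_one, hi]
  split_ifs with hend
  · have hge : j + 1 ≤ (i + 1) * m / n := (gc (j + 1) (i + 1)).mp hend.ge
    have hle := Nat.add_one_mul_div_le h i
    omega
  · have hle : j ≤ (i + 1) * m / n := (gc j (i + 1)).mp (by omega)
    have := hlt (i + 1) (by omega)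
    omega

theorem christoffelWord_eq_flatMap_of_two_mul_le {m n : ℕ} (hm : 0 < m) (h : 2 * m ≤ n) :
    christoffelWord m n = (christoffelWord (m - n % m) m).flatMap (block m n) := by
  set q := n / m
  set r := n % m
  have hqr : m * q + r = n := Nat.div_add_mod n m
  have hr : r < m := Nat.mod_lt n hm
  have hq : 2 ≤ q := (Nat.le_div_iff_mul_le hm).mpr (by omega)
  -- `c j = ⌈jn/m⌉`, the position of the `j`-th letter `1`
  set c : ℕ → ℕ := fun j => j * (q + 1) - j * (m - r) / m
  have gc : GaloisConnection c fun i => i * m / n :=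
    Nat.galoisConnection_mul_sub_mul_div hm (by omega)
      (by rw [Nat.add_one_mul, Nat.mul_comm]; omega)
  have hc0 : c 0 = 0 := by simp [c]
  have hcm : c m = n := by
    simp only [c, Nat.mul_div_cancel_left _ hm]
    rw [Nat.mul_add_one]
    omega
  have hblock : ∀ j,
      ((List.range' (c j) (c (j + 1) - c j)).map fun i : ℕ => chi m n ((i : ℤ) + 1)) =
        block m n (chi (m - r) m ((j : ℤ) + 1)) := by
    intro j
    set u := j * (m - r) / m
    set v := (j + 1) * (m - r) / m
    have huj : u ≤ j :=
      Nat.div_le_of_le_mul (Nat.mul_comm m j ▸ Nat.mul_le_mul_left j (by omega))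
    have huv : u ≤ v := Nat.div_le_div_right (Nat.mul_le_mul_right _ j.le_succ)
    have hvu : v ≤ u + 1 := Nat.add_one_mul_div_le (by omega) j
    have hjq : j ≤ j * (q + 1) := Nat.le_mul_of_pos_right j (by omega)
    have hcj : c j = j * (q + 1) - u := rfl
    have hcj1 : c (j + 1) = j * (q + 1) + (q + 1) - v := by rw [← Nat.add_one_mul]
    have hlt : c j < c (j + 1) := by omega
    rw [List.map_congr_left fun i hi => chi_eq_ite_of_galoisConnection (by omega) gc
      (List.mem_range'_1.mp hi).1 (by have := (List.mem_range'_1.mp hi).2; omega),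
      List.map_range'_eq_replicate_append _ _ hlt, chi_natCast_add_one]
    simp only [block, if_pos h]
    have hv : v = u ∨ v = u + 1 := by omega
    split_ifs with hchi <;> congr 2 <;> omega
  calc christoffelWord m n
      = (List.range' (c 0) (c m - c 0)).map fun i : ℕ => chi m n ((i : ℤ) + 1) := by
        rw [hc0, hcm, Nat.sub_zero, ← List.range_eq_range']
        rfl
    _ = ((List.range m).map fun j => (List.range' (c j) (c (j + 1) - c j)).map
          fun i : ℕ => chi m n ((i : ℤ) + 1)).flatten := by
        rw [List.range'_eq_flatten_map_range' c gc.monotone_l, List.map_flatten, List.map_map]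
        rfl
    _ = _ := by
        simp only [hblock, christoffelWord, List.flatMap_def, List.map_map]
        rfl

lemma map_reverse_block {m n : ℕ} (h : n < 2 * m) {b : ℤ} (hb : b = 0 ∨ b = 1) :
    (block (n - m) n b).reverse.map (1 - ·) = block m n (1 - b) := by
  have h' : 2 * (n - m) ≤ n := by omega
  rcases hb with rfl | rfl <;> simp [block, h', h.not_ge, List.map_replicate]

theorem christoffelWord_eq_flatMap_of_lt_two_mul {m n : ℕ} (hmn : m < n) (h : n < 2 * m) :
    christoffelWord m n = (christoffelWord (n % (n - m)) (n - m)).flatMap (block m n) := by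
  set d := n - m
  have hr : n % d ≤ d := (Nat.mod_lt n (by omega)).le
  have hdual := christoffelWord_eq_flatMap_of_two_mul_le (m := d) (n := n) (by omega) (by omega)
  calc christoffelWord m n
      = (christoffelWord d n).reverse.map (1 - ·) := christoffelWord_eq_map_reverse hmn.le
    _ = (christoffelWord (d - n % d) d).reverse.flatMap
          fun b => (block d n b).reverse.map (1 - ·) := by
        rw [hdual, List.reverse_flatMap, List.map_flatMap]
        rfl
    _ = ((christoffelWord (d - n % d) d).reverse.map (1 - ·)).flatMap (block m n) := by
        rw [List.flatMap_map]
        refine List.flatMap_congr fun b hb => map_reverse_block h ?_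
        exact eq_zero_or_one_of_mem_christoffelWord (Nat.sub_le d _) (List.mem_reverse.mp hb)
    _ = (christoffelWord (n % d) d).flatMap (block m n) := by
        rw [← christoffelWord_eq_map_reverse hr]

lemma euclStep_of_two_mul_le {m n : ℕ} (h : 2 * m ≤ n) : euclStep m n = (m - n % m, m) := by
  have hqr : m * (n / m) + n % m = n := Nat.div_add_mod n m
  rw [euclStep, if_pos h, Nat.mul_add_one]
  congr 1
  omega

lemma euclStep_of_lt_two_mul {m n : ℕ} (h : n < 2 * m) : euclStep m n = (n % (n - m), n - m) := by
  rw [euclStep, if_neg h.not_ge, Nat.mod_def]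

lemma ofFn_chi_eq_christoffelWord (m n : ℕ) :
    (List.ofFn fun i : Fin n => chi m n ((i : ℕ) + 1)) = christoffelWord m n :=
  List.ofFn_eq_map_range n fun i : ℕ => chi m n ((i : ℤ) + 1)

lemma flatten_ofFn_block_chi_eq_flatMap (m n m' n' : ℕ) :
    (List.ofFn fun i : Fin n' => block m n (chi m' n' ((i : ℕ) + 1))).flatten =
      (christoffelWord m' n').flatMap (block m n) := by
  rw [List.ofFn_eq_map_range n' fun j : ℕ => block m n (chi m' n' ((j : ℤ) + 1)),
    christoffelWord, List.flatMap_def, List.map_map]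
  rfl

/-- For coprime `0 < m < n` with `(m', n') = f(m,n)`: `m'` and `n'`
are coprime with `0 ≤ m' ≤ n' < n`, and the list `(χ_{m,n}(1), …, χ_{m,n}(n))` is the
concatenation `B_{χ_{m',n'}(1)} ++ ⋯ ++ B_{χ_{m',n'}(n')}`. -/
theorem chi_block_decomposition (m n : ℕ) (hm : 0 < m) (hmn : m < n)
    (hcop : Nat.Coprime m n) :
    Nat.Coprime (euclStep m n).1 (euclStep m n).2 ∧
    (euclStep m n).1 ≤ (euclStep m n).2 ∧ (euclStep m n).2 < n ∧
    (List.ofFn fun i : Fin n => chi m n ((i : ℕ) + 1)) =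
      (List.ofFn fun i : Fin (euclStep m n).2 =>
        block m n (chi (euclStep m n).1 (euclStep m n).2 ((i : ℕ) + 1))).flatten := by
  rw [ofFn_chi_eq_christoffelWord, flatten_ofFn_block_chi_eq_flatMap]
  rcases le_or_gt (2 * m) n with h | h
  · have hr : n % m ≤ m := (Nat.mod_lt n hm).le
    rw [euclStep_of_two_mul_le h]
    refine ⟨(Nat.coprime_self_sub_left hr).mpr ?_, Nat.sub_le m _, hmn,
      christoffelWord_eq_flatMap_of_two_mul_le hm h⟩
    rw [Nat.Coprime, ← Nat.gcd_rec]
    exact hcop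
  · rw [euclStep_of_lt_two_mul h]
    refine ⟨?_, (Nat.mod_lt n (by omega)).le, by omega,
      christoffelWord_eq_flatMap_of_lt_two_mul hmn h⟩
    rw [Nat.Coprime, ← Nat.gcd_rec]
    exact (Nat.coprime_self_sub_left hmn.le).mpr hcop
end

section
/- Let q ≥ 1 be an integer and let (B₁, B₀) be either (i) B₁ = (0^{q−1}, 1) and B₀ = (0^{q}, 1), or (ii) B₁ = (0, 1^{q}) and B₀ = (0, 1^{q−1}). For a finite list β = (β(1),…,β(ℓ)) with entries in {0,1}, let Φ(β) be the concatenation B_{β(1)} ++ ⋯ ++ B_{β(ℓ)}. Then for any two nonempty lists β, γ with entries in {0,1}: av(β) ≥ av(γ) if and only if av(Φ(β)) ≥ av(Φ(γ)). -/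
/-!
Write `ℓ` and `s` for the length and the sum of a `{0,1}`-list `β`, and `σᵢ`, `nᵢ` for the sum
and the length of `Bᵢ`. Then `Φ(β)` has sum `(ℓ - s) σ₀ + s σ₁` and length `(ℓ - s) n₀ + s n₁`,
and after cross-multiplying, `av(Φ(β)) - av(Φ(γ))` has the sign of
`(σ₁ n₀ - σ₀ n₁) (s_β ℓ_γ - s_γ ℓ_β)`, i.e. of `av(B₁) - av(B₀)` times `av(β) - av(γ)`.
So `Φ` preserves the order of averages as soon as `av(B₀) < av(B₁)`, which holds in both
cases of the theorem (with `σ₁ n₀ - σ₀ n₁ = 1`).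
-/

/-- The average of the entries of a list of integers, as a rational number. -/
def listAv (l : List ℤ) : ℚ := (l.sum : ℚ) / (l.length : ℚ)

/-- `blockSub B1 B0 β = Φ(β)` is the concatenation `B_{β(1)} ++ ⋯ ++ B_{β(ℓ)}`,
where `B_b = B1` if `b = 1` and `B_b = B0` otherwise. -/
def blockSub (B1 B0 : List ℤ) (β : List ℤ) : List ℤ :=
  (β.map (fun b => if b = 1 then B1 else B0)).flatten

lemma listAv_le_listAv_iff {l m : List ℤ} (hl : l ≠ []) (hm : m ≠ []) :
    listAv m ≤ listAv l ↔ m.sum * l.length ≤ l.sum * m.length := by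
  have hl' : (0 : ℚ) < l.length := by exact_mod_cast List.length_pos_iff.mpr hl
  have hm' : (0 : ℚ) < m.length := by exact_mod_cast List.length_pos_iff.mpr hm
  rw [listAv, listAv, div_le_div_iff₀ hm' hl']
  exact_mod_cast Iff.rfl

lemma listAv_lt_listAv_iff {l m : List ℤ} (hl : l ≠ []) (hm : m ≠ []) :
    listAv m < listAv l ↔ m.sum * l.length < l.sum * m.length := by
  rw [← not_le, ← not_le, listAv_le_listAv_iff hm hl]

lemma sum_map_ite_eq_one {x y : ℤ} {β : List ℤ} (hβ : ∀ b ∈ β, b = 0 ∨ b = 1) :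
    (β.map fun b => if b = 1 then x else y).sum = (β.length - β.sum) * y + β.sum * x := by
  induction β with
  | nil => simp
  | cons b β ih =>
    rw [List.forall_mem_cons] at hβ
    rcases hβ.1 with rfl | rfl <;> simp [ih hβ.2] <;> ring

lemma sum_blockSub (B1 B0 : List ℤ) {β : List ℤ} (hβ : ∀ b ∈ β, b = 0 ∨ b = 1) :
    (blockSub B1 B0 β).sum = (β.length - β.sum) * B0.sum + β.sum * B1.sum := by
  rw [← sum_map_ite_eq_one hβ, blockSub, List.sum_flatten, List.map_map]
  congr 2 with b
  simp only [Function.comp_apply, apply_ite List.sum]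

lemma length_blockSub (B1 B0 : List ℤ) {β : List ℤ} (hβ : ∀ b ∈ β, b = 0 ∨ b = 1) :
    ((blockSub B1 B0 β).length : ℤ) = (β.length - β.sum) * B0.length + β.sum * B1.length := by
  rw [← sum_map_ite_eq_one hβ, blockSub, List.length_flatten, List.map_map, Nat.cast_list_sum,
    List.map_map]
  congr 2 with b
  simp only [Function.comp_apply, apply_ite List.length, apply_ite ((↑) : ℕ → ℤ)]

lemma blockSub_ne_nil {B1 B0 β : List ℤ} (h1 : B1 ≠ []) (h0 : B0 ≠ []) (hβ : β ≠ []) :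
    blockSub B1 B0 β ≠ [] := by
  obtain ⟨b, β, rfl⟩ := List.exists_cons_of_ne_nil hβ
  simp only [blockSub, List.map_cons, List.flatten_cons, ne_eq, List.append_eq_nil_iff, not_and]
  split_ifs <;> simp [*]

theorem listAv_blockSub_le_iff {B1 B0 : List ℤ} (h1 : B1 ≠ []) (h0 : B0 ≠ [])
    (hB : listAv B0 < listAv B1) {β γ : List ℤ} (hβ : β ≠ []) (hγ : γ ≠ [])
    (hβ01 : ∀ b ∈ β, b = 0 ∨ b = 1) (hγ01 : ∀ b ∈ γ, b = 0 ∨ b = 1) :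
    listAv γ ≤ listAv β ↔ listAv (blockSub B1 B0 γ) ≤ listAv (blockSub B1 B0 β) := by
  rw [listAv_lt_listAv_iff h1 h0] at hB
  rw [listAv_le_listAv_iff hβ hγ,
    listAv_le_listAv_iff (blockSub_ne_nil h1 h0 hβ) (blockSub_ne_nil h1 h0 hγ),
    sum_blockSub _ _ hβ01, sum_blockSub _ _ hγ01, length_blockSub _ _ hβ01,
    length_blockSub _ _ hγ01, ← sub_nonneg, ← sub_nonneg (a := _ * _)]
  have cross_diff : ∀ sβ lβ sγ lγ σ₁ σ₀ n₁ n₀ : ℤ,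
      ((lβ - sβ) * σ₀ + sβ * σ₁) * ((lγ - sγ) * n₀ + sγ * n₁) -
        ((lγ - sγ) * σ₀ + sγ * σ₁) * ((lβ - sβ) * n₀ + sβ * n₁) =
      (σ₁ * n₀ - σ₀ * n₁) * (sβ * lγ - sγ * lβ) := by
    intros; ring
  rw [cross_diff, mul_nonneg_iff_of_pos_left (sub_pos.mpr hB)]

lemma blocks_ne_nil_and_listAv_lt (q : ℕ) (hq : 1 ≤ q) (B1 B0 : List ℤ)
    (hB : (B1 = List.replicate (q - 1) 0 ++ [1] ∧ B0 = List.replicate q 0 ++ [1]) ∨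
          (B1 = 0 :: List.replicate q 1 ∧ B0 = 0 :: List.replicate (q - 1) 1)) :
    B1 ≠ [] ∧ B0 ≠ [] ∧ listAv B0 < listAv B1 := by
  obtain ⟨p, rfl⟩ : ∃ p, q = p + 1 := ⟨q - 1, by omega⟩
  rcases hB with ⟨rfl, rfl⟩ | ⟨rfl, rfl⟩ <;>
    refine ⟨by simp, by simp, (listAv_lt_listAv_iff (by simp) (by simp)).mpr ?_⟩ <;>
    simp; nlinarith

/-- Let `q ≥ 1` and let `(B₁, B₀)` be either `((0^{q−1},1), (0^q,1))`
or `((0,1^q), (0,1^{q−1}))`. Then for any two nonempty `{0,1}`-lists `β, γ`: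
`av(β) ≥ av(γ)` iff `av(Φ(β)) ≥ av(Φ(γ))`. -/
theorem av_iff_av_blocks (q : ℕ) (hq : 1 ≤ q) (B1 B0 : List ℤ)
    (hB : (B1 = List.replicate (q - 1) 0 ++ [1] ∧ B0 = List.replicate q 0 ++ [1]) ∨
          (B1 = 0 :: List.replicate q 1 ∧ B0 = 0 :: List.replicate (q - 1) 1)) :
    ∀ β γ : List ℤ, β ≠ [] → γ ≠ [] →
      (∀ b ∈ β, b = 0 ∨ b = 1) → (∀ b ∈ γ, b = 0 ∨ b = 1) →
      (listAv γ ≤ listAv β ↔ listAv (blockSub B1 B0 γ) ≤ listAv (blockSub B1 B0 β)) := by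
  obtain ⟨h1, h0, hav⟩ := blocks_ne_nil_and_listAv_lt q hq B1 B0 hB
  exact fun β γ hβ hγ hβ01 hγ01 => listAv_blockSub_le_iff h1 h0 hav hβ hγ hβ01 hγ01
end

section
/- Let m and n be coprime integers with 1 < m < n, let (m', n') = f(m,n), and let T(0) = 0, T(i) = T(i−1) + len(B_{χ_{m',n'}(i)}) for i ∈ {1,…,n'} be the block boundaries. Fix 1 ≤ i ≤ j ≤ n' and set h = T(i−1) + 1. Then the maximum over l ∈ {h, …, T(j)} of the averages av(χ_{m,n}|_{[h,l]}) = (Σ_{k=h}^{l} χ_{m,n}(k))/(l − h + 1) is attained at some l of the form l = T(i₀) with i ≤ i₀ ≤ j. (In the paper's terminology: a sharp subsegment with the same head of a level-one subsegment of χ_{m,n} can be taken of level one.) -/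
/-- The block boundaries: `T(0) = 0` and `T(i) = T(i−1) + len(B_{χ_{m',n'}(i)})`
where `(m', n') = f(m,n)`. -/
def Tb (m n : ℕ) (i : ℕ) : ℕ :=
  ∑ k ∈ Finset.range i,
    (block m n (chi (euclStep m n).1 (euclStep m n).2 ((k : ℤ) + 1))).length

/-- The average `av(χ_{m,n}|_{[a,b]}) = (Σ_{k=a}^{b} χ_{m,n}(k))/(b − a + 1)`. -/
def avgChi (m n : ℕ) (a b : ℕ) : ℚ :=
  (∑ k ∈ Finset.Icc a b, (chi m n (k : ℤ) : ℚ)) / ((b : ℚ) - (a : ℚ) + 1)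


section Aux

lemma ediv_eq_of (a b c : ℤ) (hb : 0 < b) (h1 : c * b ≤ a) (h2 : a < (c+1) * b) : a / b = c := by
  have hle : c ≤ a / b := (Int.le_ediv_iff_mul_le hb).2 h1
  have hlt : a / b < c + 1 := (Int.ediv_lt_iff_lt_mul hb).2 h2
  omega

lemma chi_nonneg (m n : ℕ) (k : ℤ) : 0 ≤ chi m n k := by
  unfold chi
  rw [Int.fdiv_eq_ediv_of_nonneg _ (by positivity), Int.fdiv_eq_ediv_of_nonneg _ (by positivity)]
  have : ((k-1) * m : ℤ) ≤ k * m := by nlinarith [(Int.ofNat_nonneg m)]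
  rcases Nat.eq_zero_or_pos n with h | h
  · subst h; simp
  · have := Int.ediv_le_ediv (c := (n:ℤ)) (by exact_mod_cast h) this
    omega

lemma chi_le_one (m n : ℕ) (hmn : m ≤ n) (k : ℤ) : chi m n k ≤ 1 := by
  unfold chi
  rw [Int.fdiv_eq_ediv_of_nonneg _ (by positivity), Int.fdiv_eq_ediv_of_nonneg _ (by positivity)]
  rcases Nat.eq_zero_or_pos n with h | h
  · subst h; simp
  · have h1 : (k * m : ℤ) ≤ (k-1) * m + 1 * n := by
      have : (m:ℤ) ≤ n := by exact_mod_cast hmn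
      nlinarith
    have h2 := Int.ediv_le_ediv (c := (n:ℤ)) (by exact_mod_cast h) h1
    rw [Int.add_mul_ediv_right _ _ (by exact_mod_cast h.ne')] at h2
    omega

lemma chi_sum (m n : ℕ) (N : ℕ) :
    ∑ k ∈ Finset.range N, chi m n ((k:ℤ)+1) = Int.fdiv ((N:ℤ) * m) n := by
  induction N with
  | zero => simp [Int.fdiv]
  | succ N ih =>
      rw [Finset.sum_range_succ, ih]
      unfold chi
      push_cast
      ring_nf

lemma Tb_case1 (m n : ℕ) (hm : 1 < m) (hmn : m < n) (c : 2 * m ≤ n) (i : ℕ) :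
    (Tb m n i : ℤ) = -((-(i * n) : ℤ) / m) := by
  set q := n / m with hq
  have hm0 : 0 < m := by omega
  have hdm := Nat.div_add_mod n m
  rw [← hq] at hdm
  have hmod := Nat.mod_lt n hm0
  have hes : euclStep m n = (m * (q + 1) - n, m) := by
    unfold euclStep; rw [if_pos c]
  have hq2 : 2 ≤ q := by
    rw [hq]; exact (Nat.le_div_iff_mul_le hm0).2 (by omega)
  have e1 : m * (q + 1) = m * q + m := by ring
  have hQ : n ≤ m * (q + 1) := by omega
  have hlen : ∀ b : ℤ, 0 ≤ b → b ≤ 1 →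
      ((block m n b).length : ℤ) = (q : ℤ) + 1 - b := by
    intro b hb0 hb1
    unfold block
    rw [if_pos c]
    rcases (by omega : b = 0 ∨ b = 1) with h | h <;> subst h <;> simp <;> omega
  have hconst : (i:ℤ) * ((q:ℤ)+1) = ∑ _k ∈ Finset.range i, ((q:ℤ)+1) := by
    rw [Finset.sum_const, Finset.card_range, nsmul_eq_mul]
  have hTb : (Tb m n i : ℤ) = (i : ℤ) * ((q:ℤ)+1) - Int.fdiv ((i:ℤ) * ((m * (q+1) - n : ℕ) : ℤ)) m := by
    unfold Tb
    rw [hes]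
    push_cast [← chi_sum (m * (q+1) - n) m i]
    rw [hconst, ← Finset.sum_sub_distrib]
    apply Finset.sum_congr rfl
    intro k _
    rw [hlen _ (chi_nonneg _ _ _) (chi_le_one _ _ (by omega) _)]
  rw [hTb]
  have hcast : ((m * (q+1) - n : ℕ) : ℤ) = ((m * (q+1) : ℕ) : ℤ) - n := by omega
  have hcast2 : ((m * (q+1) : ℕ) : ℤ) = (m:ℤ) * ((q:ℤ)+1) := by push_cast; ring
  rw [Int.fdiv_eq_ediv_of_nonneg _ (by positivity), hcast, hcast2]
  have : ((i:ℤ)) * ((m:ℤ) * ((q:ℤ)+1) - n) = -((i:ℤ)*n) + ((i:ℤ)*((q:ℤ)+1)) * m := by ring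
  rw [this, Int.add_mul_ediv_right _ _ (by exact_mod_cast hm0.ne')]
  ring

lemma Tb_case2 (m n : ℕ) (hm : 1 < m) (hmn : m < n) (c : ¬ 2 * m ≤ n) (i : ℕ) :
    (Tb m n i : ℤ) = ((i * n : ℤ)) / ((n - m : ℕ) : ℤ) := by
  set d := n - m with hd
  have hd0 : 0 < d := by omega
  set q := n / d with hq
  have hdm := Nat.div_add_mod n d
  rw [← hq] at hdm
  have hmod := Nat.mod_lt n hd0
  have hes : euclStep m n = (n - d * q, d) := by
    unfold euclStep; rw [if_neg c]
  have hq2 : 2 ≤ q := by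
    rw [hq]; exact (Nat.le_div_iff_mul_le hd0).2 (by omega)
  have hlen : ∀ b : ℤ, 0 ≤ b → b ≤ 1 →
      ((block m n b).length : ℤ) = (q : ℤ) + b := by
    intro b hb0 hb1
    unfold block
    rw [if_neg c, show n - m = d from hd.symm]
    rcases (by omega : b = 0 ∨ b = 1) with h | h <;> subst h <;> simp <;> omega
  have hconst : (i:ℤ) * (q:ℤ) = ∑ _k ∈ Finset.range i, ((q:ℤ)) := by
    rw [Finset.sum_const, Finset.card_range, nsmul_eq_mul]
  have hTb : (Tb m n i : ℤ) = (i : ℤ) * (q:ℤ) + Int.fdiv ((i:ℤ) * ((n - d * q : ℕ) : ℤ)) d := by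
    unfold Tb
    rw [hes]
    push_cast [← chi_sum (n - d * q) d i]
    rw [hconst, ← Finset.sum_add_distrib]
    apply Finset.sum_congr rfl
    intro k _
    rw [hlen _ (chi_nonneg _ _ _) (chi_le_one _ _ (by omega) _)]
  rw [hTb]
  have hcast : ((n - d * q : ℕ) : ℤ) = (n:ℤ) - ((d * q : ℕ) : ℤ) := by omega
  have hcast2 : ((d * q : ℕ) : ℤ) = (d:ℤ) * (q:ℤ) := by push_cast; ring
  rw [Int.fdiv_eq_ediv_of_nonneg _ (by positivity), hcast, hcast2]
  have : ((i:ℤ)) * ((n:ℤ) - (d:ℤ) * q) = (i:ℤ)*n + (-((i:ℤ)*q)) * d := by ring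
  rw [this, Int.add_mul_ediv_right _ _ (by exact_mod_cast hd0.ne')]
  push_cast
  ring

lemma Tb_strictMono (m n : ℕ) : StrictMono (Tb m n) := by
  apply strictMono_nat_of_lt_succ
  intro k
  unfold Tb
  rw [Finset.sum_range_succ]
  have : 0 < (block m n (chi (euclStep m n).1 (euclStep m n).2 ((k:ℤ)+1))).length := by
    unfold block
    split <;> split <;> simp
  omega

lemma chi_one_case1 (m n : ℕ) (hm : 1 < m) (hmn : m < n) (c : 2 * m ≤ n)
    (k : ℕ) (hk : 1 ≤ k) (h1 : chi m n (k : ℤ) = 1) : ∃ t, Tb m n t = k := by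
  have hn0 : (0:ℤ) < n := by exact_mod_cast (by omega : 0 < n)
  have hm0 : (0:ℤ) < m := by exact_mod_cast (by omega : 0 < m)
  unfold chi at h1
  rw [Int.fdiv_eq_ediv_of_nonneg _ hn0.le, Int.fdiv_eq_ediv_of_nonneg _ hn0.le] at h1
  set a : ℤ := ((k:ℤ) * m) / n with ha
  have hb1 := Int.mul_ediv_add_emod ((k:ℤ) * m) n
  have hr0 := Int.emod_nonneg ((k:ℤ) * m) hn0.ne'
  have hr1 := Int.emod_lt_of_pos ((k:ℤ) * m) hn0
  have hb2 := Int.mul_ediv_add_emod (((k:ℤ) - 1) * m) n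
  have hs0 := Int.emod_nonneg (((k:ℤ) - 1) * m) hn0.ne'
  have hs1 := Int.emod_lt_of_pos (((k:ℤ) - 1) * m) hn0
  -- from h1 : a - ((k-1)m)/n = 1
  have key1 : ((k:ℤ) - 1) * m < a * n := by nlinarith [h1]
  have key2 : a * n ≤ (k:ℤ) * m := by nlinarith
  have ha0 : 0 ≤ a := by nlinarith [(by exact_mod_cast hk : (1:ℤ) ≤ (k:ℤ))]
  refine ⟨a.toNat, ?_⟩
  have : (Tb m n a.toNat : ℤ) = (k : ℤ) := by
    rw [Tb_case1 m n hm hmn c]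
    have ht : ((a.toNat : ℕ) : ℤ) = a := Int.toNat_of_nonneg ha0
    rw [ht]
    have : (-(a * n) : ℤ) / m = -(k:ℤ) := by
      apply ediv_eq_of _ _ _ hm0 <;> nlinarith
    rw [this]; ring
  exact_mod_cast this

lemma chi_zero_case2 (m n : ℕ) (hm : 1 < m) (hmn : m < n) (c : ¬ 2 * m ≤ n)
    (k : ℕ) (hk : 1 ≤ k) (h0 : chi m n (k : ℤ) = 0) : ∃ t, Tb m n t + 1 = k := by
  have hn0 : (0:ℤ) < n := by exact_mod_cast (by omega : 0 < n)
  have hd0 : (0:ℤ) < ((n - m : ℕ) : ℤ) := by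
    have : 0 < n - m := by omega
    exact_mod_cast this
  unfold chi at h0
  rw [Int.fdiv_eq_ediv_of_nonneg _ hn0.le, Int.fdiv_eq_ediv_of_nonneg _ hn0.le] at h0
  set a : ℤ := ((k:ℤ) * m) / n with ha
  have hb1 := Int.mul_ediv_add_emod ((k:ℤ) * m) n
  have hr0 := Int.emod_nonneg ((k:ℤ) * m) hn0.ne'
  have hr1 := Int.emod_lt_of_pos ((k:ℤ) * m) hn0
  have hb2 := Int.mul_ediv_add_emod (((k:ℤ) - 1) * m) n
  have hs0 := Int.emod_nonneg (((k:ℤ) - 1) * m) hn0.ne'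
  have hs1 := Int.emod_lt_of_pos (((k:ℤ) - 1) * m) hn0
  have key1 : a * n ≤ ((k:ℤ) - 1) * m := by nlinarith [h0]
  have key2 : (k:ℤ) * m < (a + 1) * n := by nlinarith
  have hk1 : (1:ℤ) ≤ (k:ℤ) := by exact_mod_cast hk
  have hmn' : (m:ℤ) < n := by exact_mod_cast hmn
  have ha0 : 0 ≤ a := by positivity
  have hak : a ≤ (k:ℤ) - 1 := by nlinarith
  refine ⟨((k:ℤ) - 1 - a).toNat, ?_⟩
  have : (Tb m n ((k:ℤ) - 1 - a).toNat : ℤ) = (k : ℤ) - 1 := by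
    rw [Tb_case2 m n hm hmn c]
    have ht : ((((k:ℤ) - 1 - a).toNat : ℕ) : ℤ) = (k:ℤ) - 1 - a := Int.toNat_of_nonneg (by omega)
    rw [ht]
    apply ediv_eq_of _ _ _ hd0
    · have hc : ((n - m : ℕ) : ℤ) = (n:ℤ) - m := by omega
      rw [hc]; nlinarith
    · have hc : ((n - m : ℕ) : ℤ) = (n:ℤ) - m := by omega
      rw [hc]; nlinarith
  omega

lemma Schi_nonneg (m n a b : ℕ) : 0 ≤ ∑ k ∈ Finset.Icc a b, (chi m n (k : ℤ) : ℚ) :=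
  Finset.sum_nonneg fun k _ => by exact_mod_cast chi_nonneg m n k

lemma Schi_le (m n : ℕ) (hmn : m ≤ n) (a b : ℕ) (hab : a ≤ b) :
    ∑ k ∈ Finset.Icc a b, (chi m n (k : ℤ) : ℚ) ≤ (b : ℚ) - a + 1 := by
  calc ∑ k ∈ Finset.Icc a b, (chi m n (k : ℤ) : ℚ)
      ≤ ∑ _k ∈ Finset.Icc a b, (1:ℚ) :=
        Finset.sum_le_sum fun k _ => by exact_mod_cast chi_le_one m n hmn k
    _ = ((Finset.Icc a b).card : ℚ) := by simp
    _ = (b : ℚ) - a + 1 := by rw [Nat.card_Icc]; push_cast [Nat.cast_sub (by omega : a ≤ b + 1)]; ring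

lemma denom_pos (a b : ℕ) (hab : a ≤ b) : (0:ℚ) < (b : ℚ) - a + 1 := by
  have : (a:ℚ) ≤ b := by exact_mod_cast hab
  linarith

lemma avg_nonneg (m n a b : ℕ) (hab : a ≤ b) : 0 ≤ avgChi m n a b :=
  div_nonneg (Schi_nonneg m n a b) (denom_pos a b hab).le


lemma sum_split (f : ℕ → ℚ) (a b l : ℕ) (h1 : a ≤ b + 1) (h2 : b ≤ l) :
    ∑ k ∈ Finset.Icc a l, f k = ∑ k ∈ Finset.Icc a b, f k + ∑ k ∈ Finset.Icc (b+1) l, f k := by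
  rw [show Finset.Icc a l = Finset.Icc a b ∪ Finset.Icc (b+1) l by
        ext x; simp only [Finset.mem_union, Finset.mem_Icc]; omega,
      Finset.sum_union (by
        rw [Finset.disjoint_left]; intro x hx hy
        simp only [Finset.mem_Icc] at hx hy; omega)]

lemma avg_zeros (m n a b l : ℕ) (hab : a ≤ b) (hbl : b < l)
    (hz : ∀ k ∈ Finset.Icc (b+1) l, chi m n (k : ℤ) = 0) :
    avgChi m n a l ≤ avgChi m n a b := by
  unfold avgChi
  rw [sum_split _ a b l (by omega) hbl.le]
  have hzz : ∑ k ∈ Finset.Icc (b+1) l, (chi m n (k : ℤ) : ℚ) = 0 := by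
    apply Finset.sum_eq_zero; intro k hk; exact_mod_cast hz k hk
  rw [hzz, add_zero]
  have hbl' : ((b:ℚ) - a + 1) ≤ ((l:ℚ) - a + 1) := by
    have : (b:ℚ) ≤ l := by exact_mod_cast hbl.le
    linarith
  exact div_le_div_of_nonneg_left (Schi_nonneg m n a b) (denom_pos a b hab) hbl'

lemma avg_all_zero (m n a l : ℕ)
    (hz : ∀ k ∈ Finset.Icc a l, chi m n (k : ℤ) = 0) : avgChi m n a l = 0 := by
  unfold avgChi
  rw [Finset.sum_eq_zero (fun k hk => by exact_mod_cast hz k hk), zero_div]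

lemma avg_step_one (m n : ℕ) (hmn : m ≤ n) (a u : ℕ) (hau : a ≤ u)
    (h1 : chi m n ((u:ℤ)+1) = 1) : avgChi m n a u ≤ avgChi m n a (u+1) := by
  unfold avgChi
  have hsum : ∑ k ∈ Finset.Icc a (u+1), (chi m n (k : ℤ) : ℚ)
      = (∑ k ∈ Finset.Icc a u, (chi m n (k : ℤ) : ℚ)) + 1 := by
    rw [Finset.sum_Icc_succ_top (by omega : a ≤ u + 1)]
    have : chi m n (((u+1 : ℕ) : ℤ)) = 1 := by push_cast; exact_mod_cast h1
    rw [this]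
    push_cast
    ring
  rw [hsum]
  set S := ∑ k ∈ Finset.Icc a u, (chi m n (k : ℤ) : ℚ) with hS
  have h0 : 0 ≤ S := Schi_nonneg m n a u
  have hle : S ≤ (u:ℚ) - a + 1 := Schi_le m n hmn a u hau
  have d1 : (0:ℚ) < (u:ℚ) - a + 1 := denom_pos a u hau
  have d2 : (0:ℚ) < ((u+1:ℕ):ℚ) - a + 1 := denom_pos a (u+1) (by omega)
  rw [div_le_div_iff₀ d1 d2]
  push_cast
  nlinarith

lemma avg_ones (m n : ℕ) (hmn : m ≤ n) (a u : ℕ) (hau : a ≤ u) :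
    ∀ d, (∀ k ∈ Finset.Icc (u+1) (u+d), chi m n (k : ℤ) = 1) →
      avgChi m n a u ≤ avgChi m n a (u + d) := by
  intro d
  induction d with
  | zero => intro _; simp
  | succ d ih =>
      intro hones
      have h1 : avgChi m n a u ≤ avgChi m n a (u + d) := by
        apply ih; intro k hk; apply hones; simp only [Finset.mem_Icc] at *; omega
      refine h1.trans ?_
      have h2 := avg_step_one m n hmn a (u + d) (by omega)
        (by have := hones (u + d + 1) (by simp only [Finset.mem_Icc]; omega)
            exact_mod_cast this)
      exact h2

end Aux

/-- For coprime `1 < m < n` with `(m', n') = f(m,n)` and block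
boundaries `T`: for `1 ≤ i ≤ j ≤ n'` and `h = T(i−1)+1`, the maximum over
`l ∈ {h,…,T(j)}` of the averages `av(χ_{m,n}|_{[h,l]})` is attained at some `l = T(i₀)`
with `i ≤ i₀ ≤ j` (a sharp subsegment with the same head can be taken of level one). -/
theorem sharp_head_at_boundary (m n : ℕ) (hm : 1 < m) (hmn : m < n)
    (hcop : Nat.Coprime m n) :
    ∀ i j : ℕ, 1 ≤ i → i ≤ j → j ≤ (euclStep m n).2 →
    ∃ i₀ : ℕ, i ≤ i₀ ∧ i₀ ≤ j ∧
      ∀ l : ℕ, Tb m n (i - 1) + 1 ≤ l → l ≤ Tb m n j →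
        avgChi m n (Tb m n (i - 1) + 1) l ≤ avgChi m n (Tb m n (i - 1) + 1) (Tb m n i₀) := by
  intro i j hi hij hjn'
  set h := Tb m n (i - 1) + 1 with hh
  have hTmono := Tb_strictMono m n
  obtain ⟨i₀, hi₀mem, hmax⟩ := Finset.exists_max_image (Finset.Icc i j)
    (fun t => avgChi m n h (Tb m n t)) ⟨i, by simp [hij]⟩
  simp only [Finset.mem_Icc] at hi₀mem
  refine ⟨i₀, hi₀mem.1, hi₀mem.2, ?_⟩
  intro l hl1 hl2
  -- h ≤ Tb t for t ≥ i
  have hhle : ∀ t, i ≤ t → h ≤ Tb m n t := by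
    intro t ht
    have : Tb m n (i-1) < Tb m n t := hTmono (by omega)
    omega
  suffices hsuf : ∃ t, i ≤ t ∧ t ≤ j ∧ avgChi m n h l ≤ avgChi m n h (Tb m n t) by
    obtain ⟨t, ht1, ht2, ht3⟩ := hsuf
    exact ht3.trans (hmax t (by simp [ht1, ht2]))
  -- minimal block index containing l
  have hex : ∃ t, l ≤ Tb m n t := ⟨j, hl2⟩
  set i' := Nat.find hex with hi'
  have hi'spec : l ≤ Tb m n i' := Nat.find_spec hex
  have hi'le : i' ≤ j := Nat.find_le hl2
  have hi'ge : i ≤ i' := by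
    by_contra hc
    push_neg at hc
    have h1 : Tb m n i' ≤ Tb m n (i-1) := hTmono.monotone (by omega)
    omega
  have hprev : Tb m n (i' - 1) < l := by
    rcases Nat.eq_or_lt_of_le hi'ge with he | hlt
    · rw [← he]; omega
    · have := Nat.find_min hex (m := i' - 1) (by omega)
      omega
  rcases Nat.eq_or_lt_of_le hi'spec with heq | hlt
  · exact ⟨i', hi'ge, hi'le, by rw [heq]⟩
  by_cases c : 2 * m ≤ n
  · -- zeros strictly inside blocks
    have hz : ∀ k ∈ Finset.Icc (Tb m n (i'-1) + 1) l, chi m n (k:ℤ) = 0 := by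
      intro k hk
      simp only [Finset.mem_Icc] at hk
      rcases (by have h1 := chi_nonneg m n (k:ℤ); have h2 := chi_le_one m n hmn.le (k:ℤ); omega :
        chi m n (k:ℤ) = 0 ∨ chi m n (k:ℤ) = 1) with h0 | h1
      · exact h0
      · exfalso
        obtain ⟨t, ht⟩ := chi_one_case1 m n hm hmn c k (by omega) h1
        have l1 : Tb m n (i'-1) < Tb m n t := by omega
        have l2 : Tb m n t < Tb m n i' := by omega
        have := hTmono.lt_iff_lt.mp l1
        have := hTmono.lt_iff_lt.mp l2
        omega
    rcases Nat.eq_or_lt_of_le hi'ge with he | hlt2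
    · -- i' = i : all zeros from h
      refine ⟨i, le_refl i, hij, ?_⟩
      have hz0 : avgChi m n h l = 0 := by
        apply avg_all_zero
        intro k hk
        apply hz
        simp only [Finset.mem_Icc] at *
        rw [← he]
        omega
      rw [hz0]
      exact avg_nonneg m n h (Tb m n i) (hhle i (le_refl i))
    · -- i < i' : compare with boundary Tb (i'-1)
      refine ⟨i' - 1, by omega, by omega, ?_⟩
      exact avg_zeros m n h (Tb m n (i'-1)) l (hhle (i'-1) (by omega)) hprev hz
  · -- ones fill up to the end of the block
    have hones : ∀ k ∈ Finset.Icc (l+1) (Tb m n i'), chi m n (k:ℤ) = 1 := by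
      intro k hk
      simp only [Finset.mem_Icc] at hk
      rcases (by have h1 := chi_nonneg m n (k:ℤ); have h2 := chi_le_one m n hmn.le (k:ℤ); omega :
        chi m n (k:ℤ) = 0 ∨ chi m n (k:ℤ) = 1) with h0 | h1
      · exfalso
        obtain ⟨t, ht⟩ := chi_zero_case2 m n hm hmn c k (by omega) h0
        have l1 : Tb m n (i'-1) < Tb m n t := by omega
        have l2 : Tb m n t < Tb m n i' := by omega
        have := hTmono.lt_iff_lt.mp l1
        have := hTmono.lt_iff_lt.mp l2
        omega
      · exact h1
    refine ⟨i', hi'ge, hi'le, ?_⟩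
    have hdl : Tb m n i' = l + (Tb m n i' - l) := by omega
    rw [hdl]
    apply avg_ones m n hmn.le h l hl1 (Tb m n i' - l)
    intro k hk
    apply hones
    simp only [Finset.mem_Icc] at *
    omega
end
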